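/- arXiv:1601.00124 — 7 statements merged into one kernel-verified Lean document; each statement's English description precedes it below -/
import Mathlib

section
/- Every logarithmically completely monotonic function on an open interval I is completely monotonic on I. -/
noncomputable section
open Real Set

section Helpers
open Topology Finset

lemma iterWithin_eq {s : Set ℝ} (hs : IsOpen s) {u : ℝ → ℝ} (n : ℕ) {x : ℝ} (hx : x ∈ s) :
    iteratedDerivWithin n u s x = iteratedDeriv n u x := by
  rw [iteratedDerivWithin_eq_iteratedFDerivWithin, iteratedDeriv_eq_iteratedFDeriv,
    iteratedFDerivWithin_of_isOpen n hs hx]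

lemma diffAt_iteratedDeriv {s : Set ℝ} (hs : IsOpen s) {u : ℝ → ℝ}
    (hu : ContDiffOn ℝ (⊤ : ℕ∞) u s) (k : ℕ) {x : ℝ} (hx : x ∈ s) :
    DifferentiableAt ℝ (iteratedDeriv k u) x := by
  have h1 : DifferentiableWithinAt ℝ (iteratedDerivWithin k u s) s x :=
    (hu.differentiableOn_iteratedDerivWithin (by exact_mod_cast ENat.coe_lt_top k)
      hs.uniqueDiffOn) x hx
  have h2 : DifferentiableAt ℝ (iteratedDerivWithin k u s) x :=
    h1.differentiableAt (hs.mem_nhds hx)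
  refine h2.congr_of_eventuallyEq ?_
  filter_upwards [hs.mem_nhds hx] with y hy
  exact (iterWithin_eq hs k hy).symm

lemma leibniz_iteratedDeriv {s : Set ℝ} (hs : IsOpen s) {u v : ℝ → ℝ}
    (hu : ContDiffOn ℝ (⊤ : ℕ∞) u s) (hv : ContDiffOn ℝ (⊤ : ℕ∞) v s) :
    ∀ n : ℕ, ∀ x ∈ s, iteratedDeriv n (fun y => u y * v y) x
      = ∑ k ∈ Finset.range (n + 1),
          (n.choose k : ℝ) * iteratedDeriv k u x * iteratedDeriv (n - k) v x := by
  intro n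
  induction n with
  | zero => intro x hx; simp
  | succ n ih =>
    intro x hx
    have hA : ∀ k, DifferentiableAt ℝ (iteratedDeriv k u) x :=
      fun k => diffAt_iteratedDeriv hs hu k hx
    have hB : ∀ k, DifferentiableAt ℝ (iteratedDeriv k v) x :=
      fun k => diffAt_iteratedDeriv hs hv k hx
    have hev : iteratedDeriv n (fun y => u y * v y) =ᶠ[𝓝 x]
        fun y => ∑ k ∈ Finset.range (n + 1),
          (n.choose k : ℝ) * iteratedDeriv k u y * iteratedDeriv (n - k) v y := by
      filter_upwards [hs.mem_nhds hx] with y hy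
      exact ih y hy
    rw [iteratedDeriv_succ, hev.deriv_eq, deriv_fun_sum (fun k _ =>
      (((hA k).const_mul _).fun_mul (hB (n - k))))]
    have hterm : ∀ k ∈ Finset.range (n + 1),
        deriv (fun y => (n.choose k : ℝ) * iteratedDeriv k u y * iteratedDeriv (n - k) v y) x
          = (n.choose k : ℝ) * (iteratedDeriv (k + 1) u x * iteratedDeriv (n - k) v x
            + iteratedDeriv k u x * iteratedDeriv (n - k + 1) v x) := by
      intro k _
      rw [deriv_fun_mul ((hA k).const_mul _) (hB (n - k)), deriv_const_mul _ (hA k),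
        ← iteratedDeriv_succ, ← iteratedDeriv_succ]
      ring
    rw [Finset.sum_congr rfl hterm]
    set A := fun k => iteratedDeriv k u x with hAdef
    set B := fun k => iteratedDeriv k v x with hBdef
    have h2 : ∀ k ∈ Finset.range (n + 1), (n.choose k : ℝ) * (A (k+1) * B (n-k)
        + A k * B (n-k+1)) = (n.choose k : ℝ) * A (k+1) * B (n-k)
        + (n.choose k : ℝ) * A k * B (n+1-k) := by
      intro k hk
      rw [Finset.mem_range] at hk
      have : n - k + 1 = n + 1 - k := by omega
      rw [this]; ring
    rw [Finset.sum_congr rfl h2, Finset.sum_add_distrib]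
    rw [Finset.sum_range_succ' (fun j => ((n+1).choose j : ℝ) * A j * B (n+1-j))]
    have h3 : ∀ j ∈ Finset.range (n + 1), ((n+1).choose (j+1) : ℝ) * A (j+1) * B (n+1-(j+1))
        = (n.choose j : ℝ) * A (j+1) * B (n-j) + (n.choose (j+1) : ℝ) * A (j+1) * B (n-j) := by
      intro j _
      have h5 : n + 1 - (j + 1) = n - j := by omega
      rw [h5, Nat.choose_succ_succ, Nat.cast_add]; ring
    rw [Finset.sum_congr rfl h3, Finset.sum_add_distrib]
    have h6 : ∑ j ∈ Finset.range (n+1), (n.choose (j+1) : ℝ) * A (j+1) * B (n-j)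
        + ((n+1).choose 0 : ℝ) * A 0 * B (n+1-0)
        = ∑ k ∈ Finset.range (n+1), (n.choose k : ℝ) * A k * B (n+1-k) := by
      rw [Finset.sum_range_succ' (fun k => (n.choose k : ℝ) * A k * B (n+1-k))]
      congr 1
      · rw [Finset.sum_range_succ, Nat.choose_succ_self]
        simp only [Nat.cast_zero, zero_mul, add_zero]
        apply Finset.sum_congr rfl
        intro j hj
        have : n + 1 - (j+1) = n - j := by omega
        rw [this]
      · simp
    rw [add_assoc, h6]

end Helpers


def CompletelyMonotonicOn (f : ℝ → ℝ) (I : Set ℝ) : Prop :=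
  ContDiffOn ℝ (⊤ : ℕ∞) f I ∧ ∀ (n : ℕ), ∀ x ∈ I, 0 ≤ (-1 : ℝ) ^ n * iteratedDeriv n f x

def LogCompletelyMonotonicOn (f : ℝ → ℝ) (I : Set ℝ) : Prop :=
  (∀ x ∈ I, 0 < f x) ∧ ContDiffOn ℝ (⊤ : ℕ∞) (fun x => Real.log (f x)) I ∧
    ∀ (n : ℕ), 1 ≤ n → ∀ x ∈ I, 0 ≤ (-1 : ℝ) ^ n * iteratedDeriv n (fun x => Real.log (f x)) x

open Topology Finset in
theorem lcm_subset_cm (f : ℝ → ℝ) (a b : ℝ)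
    (hf : LogCompletelyMonotonicOn f (Ioo a b)) :
    CompletelyMonotonicOn f (Ioo a b) := by
  obtain ⟨hpos, hg, hsign⟩ := hf
  set I := Ioo a b with hIdef
  have hI : IsOpen I := isOpen_Ioo
  set g : ℝ → ℝ := fun x => Real.log (f x) with hgdef
  have hfg : ∀ x ∈ I, f x = Real.exp (g x) := fun x hx => (Real.exp_log (hpos x hx)).symm
  have hfc : ContDiffOn ℝ (⊤ : ℕ∞) f I :=
    (Real.contDiff_exp.comp_contDiffOn hg).congr hfg
  have hderiv : ∀ x ∈ I, deriv f x = deriv g x * f x := by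
    intro x hx
    have hgd : DifferentiableAt ℝ g x := by
      have := diffAt_iteratedDeriv hI hg 0 hx
      simpa [iteratedDeriv_zero] using this
    have hev : f =ᶠ[𝓝 x] fun y => Real.exp (g y) := by
      filter_upwards [hI.mem_nhds hx] with y hy
      exact hfg y hy
    rw [hev.deriv_eq, deriv_exp hgd, ← hfg x hx]
    ring
  have hg' : ContDiffOn ℝ (⊤ : ℕ∞) (deriv g) I := hg.deriv_of_isOpen hI (by simp)
  refine ⟨hfc, ?_⟩
  intro n
  induction n using Nat.strong_induction_on with
  | _ n IH =>
    match n with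
    | 0 =>
      intro x hx
      simpa [iteratedDeriv_zero] using (hpos x hx).le
    | (m+1) =>
      intro x hx
      have heq : iteratedDeriv (m+1) f x = ∑ k ∈ Finset.range (m+1),
          (m.choose k : ℝ) * iteratedDeriv (k+1) g x * iteratedDeriv (m-k) f x := by
        rw [iteratedDeriv_succ']
        have hev : deriv f =ᶠ[𝓝 x] fun y => deriv g y * f y := by
          filter_upwards [hI.mem_nhds hx] with y hy
          exact hderiv y hy
        rw [hev.iteratedDeriv_eq m, leibniz_iteratedDeriv hI hg' hfc m x hx]
        apply Finset.sum_congr rfl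
        intro k _
        rw [← iteratedDeriv_succ']
      rw [heq, Finset.mul_sum]
      apply Finset.sum_nonneg
      intro k hk
      rw [Finset.mem_range] at hk
      have hsplit : (-1:ℝ)^(m+1) = (-1:ℝ)^(k+1) * (-1:ℝ)^(m-k) := by
        rw [← pow_add]; congr 1; omega
      have e : (-1:ℝ)^(m+1) * ((m.choose k : ℝ) * iteratedDeriv (k+1) g x * iteratedDeriv (m-k) f x)
          = (m.choose k : ℝ) * (((-1:ℝ)^(k+1) * iteratedDeriv (k+1) g x)
            * ((-1:ℝ)^(m-k) * iteratedDeriv (m-k) f x)) := by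
        rw [hsplit]; ring
      rw [e]
      have h1 := hsign (k+1) (by omega) x hx
      have h2 := IH (m-k) (by omega) x hx
      exact mul_nonneg (Nat.cast_nonneg _) (mul_nonneg h1 h2)
end
end

section
/- The function f(x) = x·(log x − ψ(x)) is completely monotonic on (0,∞), where ψ = Γ'/Γ is the digamma function. -/
noncomputable section
open Real Set MeasureTheory Filter Topology

namespace AlzerAux

def phi (t : ℝ) : ℝ := (1 - Real.exp (-t))⁻¹ - t⁻¹

lemma one_sub_exp_pos {t : ℝ} (ht : 0 < t) : 0 < 1 - exp (-t) := by
  have : exp (-t) < 1 := exp_lt_one_iff.mpr (by linarith)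
  linarith

lemma one_sub_exp_le (t : ℝ) : 1 - exp (-t) ≤ t := by
  have := Real.add_one_le_exp (-t); linarith

lemma phi_nonneg {t : ℝ} (ht : 0 < t) : 0 ≤ phi t := by
  have h1 := one_sub_exp_pos ht
  have h2 : 1 - exp (-t) ≤ t := one_sub_exp_le t
  have h3 : t⁻¹ ≤ (1 - exp (-t))⁻¹ := by
    apply one_div t ▸ (one_div (1 - exp (-t))) ▸ one_div_le_one_div_of_le h1 h2
  unfold phi; linarith

lemma phi_le_one {t : ℝ} (ht : 0 < t) : phi t ≤ 1 := by
  have h1 := one_sub_exp_pos ht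
  have key : t + 1 ≤ exp t := add_one_le_exp t
  have het : (0:ℝ) < exp t := exp_pos t
  have hu : exp (-t) * exp t = 1 := by rw [← exp_add]; simp
  have h2 : (1 - exp (-t))⁻¹ ≤ 1 + t⁻¹ := by
    rw [inv_le_iff_one_le_mul₀ h1]
    have h5 : exp (-t) * (t+1) ≤ 1 := by nlinarith [exp_pos (-t)]
    have expand : (1+t⁻¹)*(1-exp (-t)) = 1 + t⁻¹ * (1 - exp (-t)*(t+1)) := by
      field_simp; ring
    have h6 : 0 ≤ t⁻¹ * (1 - exp (-t)*(t+1)) :=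
      mul_nonneg (inv_pos.mpr ht).le (by linarith)
    linarith
  unfold phi
  have h4 : (0:ℝ) ≤ t⁻¹ := by positivity
  linarith


lemma aux_sinh {u : ℝ} (hu : 0 ≤ u) : 2*u ≤ exp u - exp (-u) := by
  have key : ∀ v ∈ interior (Ici (0:ℝ)), 0 ≤ deriv (fun w => exp w - exp (-w) - 2*w) v := by
    intro v _
    have hd : HasDerivAt (fun w => exp w - exp (-w) - 2*w) (exp v - (-exp (-v)) - 2) v := by
      have h1 : HasDerivAt (fun w : ℝ => exp (-w)) (-exp (-v)) v := by
        simpa using ((hasDerivAt_id v).neg.exp)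
      simpa using ((Real.hasDerivAt_exp v).fun_sub h1).fun_sub ((hasDerivAt_id v).const_mul 2)
    rw [hd.deriv]
    have e1 : exp (v/2) * exp (v/2) = exp v := by rw [← exp_add]; ring_nf
    have e2 : exp (-(v/2)) * exp (-(v/2)) = exp (-v) := by rw [← exp_add]; ring_nf
    have e3 : exp (v/2) * exp (-(v/2)) = 1 := by rw [← exp_add]; simp
    nlinarith [sq_nonneg (exp (v/2) - exp (-(v/2)))]
  have hmono : MonotoneOn (fun w => exp w - exp (-w) - 2*w) (Ici (0:ℝ)) := by
    apply monotoneOn_of_deriv_nonneg (convex_Ici 0)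
    · exact (Real.continuous_exp.sub (Real.continuous_exp.comp continuous_neg)).sub
        (continuous_const.mul continuous_id) |>.continuousOn
    · intro v _
      have h1 : HasDerivAt (fun w : ℝ => exp (-w)) (-exp (-v)) v := by
        simpa using ((hasDerivAt_id v).neg.exp)
      exact (((Real.hasDerivAt_exp v).sub h1).sub
        ((hasDerivAt_id v).const_mul 2)).differentiableAt.differentiableWithinAt
    · exact key
  have := hmono (self_mem_Ici) hu hu
  simp only [exp_zero, neg_zero] at this
  linarith

lemma hasDerivAt_phi {t : ℝ} (ht : 0 < t) :
    HasDerivAt phi ((t^2)⁻¹ - exp (-t) * ((1 - exp (-t))^2)⁻¹) t := by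
  have h1 : HasDerivAt (fun s : ℝ => 1 - exp (-s)) (exp (-t)) t := by
    simpa using (((hasDerivAt_id t).neg.exp).const_sub 1)
  have h2 : HasDerivAt (fun s : ℝ => (1 - exp (-s))⁻¹)
      (-(exp (-t)) / (1 - exp (-t))^2) t := h1.inv (ne_of_gt (one_sub_exp_pos ht))
  have h3 : HasDerivAt (fun s : ℝ => s⁻¹) (-(t^2)⁻¹) t := by
    simpa using hasDerivAt_inv (ne_of_gt ht)
  have := h2.fun_sub h3
  exact this.congr_deriv (by ring)

lemma deriv_phi_nonneg {t : ℝ} (ht : 0 < t) :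
    0 ≤ (t^2)⁻¹ - exp (-t) * ((1 - exp (-t))^2)⁻¹ := by
  have h1 := one_sub_exp_pos ht
  have key : t * exp (-(t/2)) ≤ 1 - exp (-t) := by
    have hs := aux_sinh (u := t/2) (by linarith)
    have e3 : exp (t/2) * exp (-(t/2)) = 1 := by rw [← exp_add]; simp
    have e2 : exp (-(t/2)) * exp (-(t/2)) = exp (-t) := by rw [← exp_add]; ring_nf
    nlinarith [exp_pos (-(t/2))]
  have hsq : exp (-t) * t^2 ≤ (1 - exp (-t))^2 := by
    have h0 : 0 ≤ t * exp (-(t/2)) := by positivity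
    have := mul_self_le_mul_self h0 key
    have e2 : exp (-(t/2)) * exp (-(t/2)) = exp (-t) := by rw [← exp_add]; ring_nf
    nlinarith
  have ht2 : (0:ℝ) < t^2 := by positivity
  have hq : exp (-t) * ((1 - exp (-t))^2)⁻¹ ≤ (t^2)⁻¹ := by
    rw [← div_eq_mul_inv, div_le_iff₀ (by positivity : (0:ℝ) < (1 - exp (-t))^2),
      inv_mul_eq_div, le_div_iff₀ ht2]
    linarith
  linarith

lemma phi_continuousOn : ContinuousOn phi (Ioi 0) := fun t ht =>
  ((hasDerivAt_phi ht).differentiableAt.continuousAt).continuousWithinAt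

lemma phi_mono : MonotoneOn phi (Ioi 0) := by
  apply monotoneOn_of_deriv_nonneg (convex_Ioi 0) phi_continuousOn
  · intro t ht
    rw [interior_Ioi] at ht
    exact (hasDerivAt_phi ht).differentiableAt.differentiableWithinAt
  · intro t ht
    rw [interior_Ioi] at ht
    rw [(hasDerivAt_phi ht).deriv]
    exact deriv_phi_nonneg ht


/-- the Laplace-type integrals -/
def Fn (n : ℕ) (x : ℝ) : ℝ := ∫ t in Ioi (0:ℝ), t ^ n * exp (-(x * t)) * phi t

lemma integrableOn_pow_exp {x : ℝ} (hx : 0 < x) (n : ℕ) :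
    IntegrableOn (fun t => t ^ n * exp (-(x * t))) (Ioi 0) := by
  have h := integrableOn_rpow_mul_exp_neg_mul_rpow (p := 1) (s := (n:ℝ)) (b := x)
    (by linarith [Nat.cast_nonneg (α := ℝ) n]) zero_lt_one hx
  apply h.congr_fun ?_ measurableSet_Ioi
  intro t ht
  simp only [rpow_one, rpow_natCast]
  ring_nf

lemma kernel_continuousOn {x : ℝ} (n : ℕ) :
    ContinuousOn (fun t : ℝ => t ^ n * exp (-(x * t)) * phi t) (Ioi 0) := by
  apply ContinuousOn.mul ?_ phi_continuousOn
  exact ((continuous_pow n).continuousOn.mul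
    ((Real.continuous_exp.comp (continuous_const.mul continuous_id).neg).continuousOn))

lemma kernel_aesm {x : ℝ} (n : ℕ) :
    AEStronglyMeasurable (fun t : ℝ => t ^ n * exp (-(x * t)) * phi t)
      (volume.restrict (Ioi 0)) :=
  (kernel_continuousOn n).aestronglyMeasurable measurableSet_Ioi

lemma kernel_bound {x : ℝ} (n : ℕ) {t : ℝ} (ht : 0 < t) :
    ‖t ^ n * exp (-(x * t)) * phi t‖ ≤ t ^ n * exp (-(x * t)) := by
  rw [Real.norm_eq_abs, abs_mul, abs_of_nonneg (by positivity : (0:ℝ) ≤ t ^ n * exp (-(x*t))),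
    abs_of_nonneg (phi_nonneg ht)]
  nlinarith [phi_le_one ht, phi_nonneg ht, mul_pos (pow_pos ht n) (exp_pos (-(x*t)))]

lemma integrableOn_kernel {x : ℝ} (hx : 0 < x) (n : ℕ) :
    IntegrableOn (fun t : ℝ => t ^ n * exp (-(x * t)) * phi t) (Ioi 0) := by
  apply Integrable.mono' (integrableOn_pow_exp hx n) (kernel_aesm n)
  rw [ae_restrict_iff' measurableSet_Ioi]
  exact Eventually.of_forall fun t ht => kernel_bound n ht

lemma integral_pow_exp {x : ℝ} (hx : 0 < x) (n : ℕ) :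
    ∫ t in Ioi (0:ℝ), t ^ n * exp (-(x * t)) = n.factorial / x ^ (n + 1) := by
  have h := Real.integral_rpow_mul_exp_neg_mul_Ioi (a := (n:ℝ)+1) (r := x)
    (by positivity) hx
  rw [show ∫ t in Ioi (0:ℝ), t ^ n * exp (-(x * t))
      = ∫ t in Ioi (0:ℝ), t ^ ((n:ℝ)+1-1) * exp (-(x * t)) from
    setIntegral_congr_fun measurableSet_Ioi (fun t ht => by
      rw [add_sub_cancel_right, rpow_natCast]), h]
  rw [show (n:ℝ) + 1 = ((n+1 : ℕ) : ℝ) by push_cast; ring, rpow_natCast]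
  push_cast
  rw [Real.Gamma_nat_eq_factorial]
  rw [div_pow, one_pow, div_mul_eq_mul_div, one_mul]

lemma hasDerivAt_Fn {x : ℝ} (hx : 0 < x) (n : ℕ) :
    HasDerivAt (Fn n) (-(Fn (n+1) x)) x := by
  have hb : ∀ y ∈ Metric.ball x (x/2), x/2 ≤ y := by
    intro y hy
    rw [Metric.mem_ball, Real.dist_eq, abs_lt] at hy
    linarith [hy.1]
  have key := hasDerivAt_integral_of_dominated_loc_of_deriv_le
    (F := fun y (t : ℝ) => t ^ n * exp (-(y * t)) * phi t)
    (F' := fun y (t : ℝ) => -(t ^ (n+1) * exp (-(y * t)) * phi t))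
    (bound := fun t : ℝ => t ^ (n+1) * exp (-(x/2 * t)))
    (μ := volume.restrict (Ioi 0)) (x₀ := x)
    (Metric.ball_mem_nhds x (half_pos hx))
    (Eventually.of_forall fun y => kernel_aesm n)
    (integrableOn_kernel hx n)
    ((kernel_aesm (x := x) (n+1)).neg)
    ?_ (integrableOn_pow_exp (half_pos hx) (n+1)) ?_
  · have : (∫ t in Ioi (0:ℝ), -(t ^ (n+1) * exp (-(x * t)) * phi t)) = -(Fn (n+1) x) := by
      rw [integral_neg]; rfl
    rw [this] at key
    exact key.2
  · rw [ae_restrict_iff' measurableSet_Ioi]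
    apply Eventually.of_forall
    intro t ht y hy
    rw [norm_neg]
    calc ‖t ^ (n+1) * exp (-(y * t)) * phi t‖ ≤ t ^ (n+1) * exp (-(y * t)) :=
          kernel_bound (n+1) ht
      _ ≤ t ^ (n+1) * exp (-(x/2 * t)) := by
          have ht' : 0 < t := mem_Ioi.mp ht
          apply mul_le_mul_of_nonneg_left _ (pow_nonneg ht'.le _)
          apply exp_le_exp.mpr
          nlinarith [hb y hy]
  · rw [ae_restrict_iff' measurableSet_Ioi]
    apply Eventually.of_forall
    intro t ht y _
    have h1 : HasDerivAt (fun y : ℝ => -(y * t)) (-t) y := by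
      simpa using ((hasDerivAt_id y).mul_const t).fun_neg
    have h2 : HasDerivAt (fun y : ℝ => exp (-(y * t))) (exp (-(y*t)) * (-t)) y :=
      (Real.hasDerivAt_exp _).comp y h1
    have h3 : HasDerivAt (fun y : ℝ => t ^ n * exp (-(y * t)) * phi t)
        (t ^ n * (exp (-(y*t)) * (-t)) * phi t) y :=
      (h2.const_mul (t ^ n)).mul_const (phi t)
    exact h3.congr_deriv (by ring)


def f0 (x : ℝ) : ℝ := x * Fn 0 x

lemma iteratedDeriv_f0 (n : ℕ) : ∀ x ∈ Ioi (0:ℝ),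
    iteratedDeriv n f0 x = (-1)^n * (x * Fn n x - n * Fn (n-1) x) := by
  induction n with
  | zero => intro x _; simp [f0]
  | succ n ih =>
    intro x hx
    have hx' : (0:ℝ) < x := hx
    rw [iteratedDeriv_succ]
    have heq : iteratedDeriv n f0 =ᶠ[𝓝 x]
        fun y => (-1)^n * (y * Fn n y - n * Fn (n-1) y) := by
      filter_upwards [IsOpen.mem_nhds isOpen_Ioi hx] with y hy
      exact ih y hy
    rw [heq.deriv_eq]
    have hd1 : HasDerivAt (fun y => y * Fn n y) (1 * Fn n x + x * -(Fn (n+1) x)) x :=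
      (hasDerivAt_id x).mul (hasDerivAt_Fn hx' n)
    have hd2 : HasDerivAt (fun y => (n:ℝ) * Fn (n-1) y) ((n:ℝ) * -(Fn (n-1+1) x)) x :=
      (hasDerivAt_Fn hx' (n-1)).const_mul _
    have hcast : (n:ℝ) * -(Fn (n-1+1) x) = (n:ℝ) * -(Fn n x) := by
      cases n with
      | zero => simp
      | succ m => rfl
    rw [hcast] at hd2
    have hd : HasDerivAt (fun y => (-1:ℝ)^n * (y * Fn n y - n * Fn (n-1) y))
        ((-1:ℝ)^n * ((1 * Fn n x + x * -(Fn (n+1) x)) - (n:ℝ) * -(Fn n x))) x :=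
      (hd1.sub hd2).const_mul _
    rw [hd.deriv]
    have : ((n+1:ℕ) : ℝ) = (n:ℝ) + 1 := by push_cast; ring
    rw [show (n+1) - 1 = n from rfl, this]
    ring

lemma sign_key {x : ℝ} (hx : 0 < x) (m : ℕ) :
    ((m:ℝ)+1) * Fn m x ≤ x * Fn (m+1) x := by
  set c : ℝ := ((m:ℝ)+1)/x with hc
  have hcpos : 0 < c := by positivity
  have hA_int : IntegrableOn (fun t => x * (t^(m+1) * exp (-(x*t)) * phi t)
      - ((m:ℝ)+1) * (t^m * exp (-(x*t)) * phi t)) (Ioi 0) :=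
    ((integrableOn_kernel hx (m+1)).const_mul x).sub ((integrableOn_kernel hx m).const_mul _)
  have hB_int : IntegrableOn (fun t => phi c * (x * (t^(m+1) * exp (-(x*t)))
      - ((m:ℝ)+1) * (t^m * exp (-(x*t))))) (Ioi 0) :=
    (((integrableOn_pow_exp hx (m+1)).const_mul x).sub
      ((integrableOn_pow_exp hx m).const_mul _)).const_mul _
  have h1 : x * Fn (m+1) x - ((m:ℝ)+1) * Fn m x
      = ∫ t in Ioi (0:ℝ), (x * (t^(m+1) * exp (-(x*t)) * phi t)
        - ((m:ℝ)+1) * (t^m * exp (-(x*t)) * phi t)) := by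
    rw [integral_sub ((integrableOn_kernel hx (m+1)).const_mul x)
      ((integrableOn_kernel hx m).const_mul _), integral_const_mul, integral_const_mul]
    rfl
  have h2 : (∫ t in Ioi (0:ℝ), phi c * (x * (t^(m+1) * exp (-(x*t)))
      - ((m:ℝ)+1) * (t^m * exp (-(x*t))))) = 0 := by
    rw [integral_const_mul, integral_sub ((integrableOn_pow_exp hx (m+1)).const_mul x)
      ((integrableOn_pow_exp hx m).const_mul _), integral_const_mul, integral_const_mul,
      integral_pow_exp hx (m+1), integral_pow_exp hx m]
    have hfac : ((m+1).factorial : ℝ) = ((m:ℝ)+1) * (m.factorial : ℝ) := by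
      rw [Nat.factorial_succ]; push_cast; ring
    rw [hfac]
    field_simp
    ring
  have h3 : ∀ t ∈ Ioi (0:ℝ), phi c * (x * (t^(m+1) * exp (-(x*t)))
      - ((m:ℝ)+1) * (t^m * exp (-(x*t))))
      ≤ x * (t^(m+1) * exp (-(x*t)) * phi t) - ((m:ℝ)+1) * (t^m * exp (-(x*t)) * phi t) := by
    intro t ht
    have ht' : 0 < t := mem_Ioi.mp ht
    have key : 0 ≤ ((x*t - ((m:ℝ)+1)) * (phi t - phi c)) * (t^m * exp (-(x*t))) := by
      apply mul_nonneg _ (by positivity)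
      rcases le_total c t with hct | htc
      · exact mul_nonneg (by rw [hc] at hct; rw [div_le_iff₀ hx] at hct; linarith)
          (sub_nonneg.mpr (phi_mono (mem_Ioi.mpr hcpos) ht hct))
      · exact mul_nonneg_iff.mpr (Or.inr
          ⟨by rw [hc] at htc; rw [le_div_iff₀ hx] at htc; linarith,
           sub_nonpos.mpr (phi_mono ht (mem_Ioi.mpr hcpos) htc)⟩)
    have expand : (x * (t^(m+1) * exp (-(x*t)) * phi t) - ((m:ℝ)+1) * (t^m * exp (-(x*t)) * phi t))
        - phi c * (x * (t^(m+1) * exp (-(x*t))) - ((m:ℝ)+1) * (t^m * exp (-(x*t))))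
        = ((x*t - ((m:ℝ)+1)) * (phi t - phi c)) * (t^m * exp (-(x*t))) := by
      rw [pow_succ]; ring
    linarith
  have h4 := setIntegral_mono_on hB_int hA_int measurableSet_Ioi h3
  rw [h2, ← h1] at h4
  linarith


/-! ### The Frullani-type integral -/

def wfun (t : ℝ) : ℝ := (1 - Real.exp (-t))/t

def J (x : ℝ) : ℝ := ∫ t in Ioi (0:ℝ), exp (-(x*t)) * wfun t

lemma wfun_nonneg {t : ℝ} (ht : 0 < t) : 0 ≤ wfun t :=
  div_nonneg (by linarith [one_sub_exp_pos ht]) ht.le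

lemma wfun_le_one {t : ℝ} (ht : 0 < t) : wfun t ≤ 1 :=
  (div_le_one ht).mpr (one_sub_exp_le t)

lemma wfun_continuousOn : ContinuousOn wfun (Ioi 0) := by
  apply ContinuousOn.div
  · exact (continuous_const.sub (Real.continuous_exp.comp continuous_neg)).continuousOn
  · exact continuousOn_id
  · exact fun t ht => ne_of_gt (mem_Ioi.mp ht)

lemma integrableOn_exp {x : ℝ} (hx : 0 < x) :
    IntegrableOn (fun t : ℝ => exp (-(x * t))) (Ioi 0) := by
  simpa using integrableOn_pow_exp hx 0

lemma integral_exp_Ioi {x : ℝ} (hx : 0 < x) :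
    ∫ t in Ioi (0:ℝ), exp (-(x * t)) = 1/x := by
  have := integral_pow_exp hx 0
  simpa using this

lemma wkernel_aesm {x : ℝ} (n : ℕ) :
    AEStronglyMeasurable (fun t : ℝ => t ^ n * exp (-(x * t)) * wfun t)
      (volume.restrict (Ioi 0)) := by
  apply ContinuousOn.aestronglyMeasurable _ measurableSet_Ioi
  exact ((continuous_pow n).continuousOn.mul
    ((Real.continuous_exp.comp (continuous_const.mul continuous_id).neg).continuousOn)).mul
    wfun_continuousOn

lemma wkernel_bound {x : ℝ} (n : ℕ) {t : ℝ} (ht : 0 < t) :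
    ‖t ^ n * exp (-(x * t)) * wfun t‖ ≤ t ^ n * exp (-(x * t)) := by
  rw [Real.norm_eq_abs, abs_mul, abs_of_nonneg (by positivity : (0:ℝ) ≤ t ^ n * exp (-(x*t))),
    abs_of_nonneg (wfun_nonneg ht)]
  nlinarith [wfun_le_one ht, wfun_nonneg ht, mul_pos (pow_pos ht n) (exp_pos (-(x*t)))]

lemma integrableOn_wkernel {x : ℝ} (hx : 0 < x) (n : ℕ) :
    IntegrableOn (fun t : ℝ => t ^ n * exp (-(x * t)) * wfun t) (Ioi 0) := by
  apply Integrable.mono' (integrableOn_pow_exp hx n) (wkernel_aesm n)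
  rw [ae_restrict_iff' measurableSet_Ioi]
  exact Eventually.of_forall fun t ht => wkernel_bound n ht

lemma hasDerivAt_J {x : ℝ} (hx : 0 < x) :
    HasDerivAt J (-(1/x - 1/(x+1))) x := by
  have hb : ∀ y ∈ Metric.ball x (x/2), x/2 ≤ y := by
    intro y hy
    rw [Metric.mem_ball, Real.dist_eq, abs_lt] at hy
    linarith [hy.1]
  have haesm : ∀ y : ℝ, AEStronglyMeasurable (fun t : ℝ => exp (-(y * t)) * wfun t)
      (volume.restrict (Ioi 0)) := by
    intro y
    have := wkernel_aesm (x := y) 0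
    simpa using this
  have hintJ : ∀ y : ℝ, 0 < y → IntegrableOn (fun t : ℝ => exp (-(y * t)) * wfun t) (Ioi 0) := by
    intro y hy
    have := integrableOn_wkernel hy 0
    simpa using this
  have key := hasDerivAt_integral_of_dominated_loc_of_deriv_le
    (F := fun y (t : ℝ) => exp (-(y * t)) * wfun t)
    (F' := fun y (t : ℝ) => -(t * exp (-(y * t)) * wfun t))
    (bound := fun t : ℝ => t ^ 1 * exp (-(x/2 * t)))
    (μ := volume.restrict (Ioi 0)) (x₀ := x)
    (Metric.ball_mem_nhds x (half_pos hx))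
    (Eventually.of_forall fun y => haesm y)
    (hintJ x hx)
    (by
      have := (wkernel_aesm (x := x) 1).neg
      simp only [pow_one] at this
      exact this)
    ?_ (integrableOn_pow_exp (half_pos hx) 1) ?_
  · have hval : (∫ t in Ioi (0:ℝ), -(t * exp (-(x * t)) * wfun t)) = -(1/x - 1/(x+1)) := by
      rw [integral_neg]
      congr 1
      rw [show ∫ t in Ioi (0:ℝ), t * exp (-(x * t)) * wfun t
          = ∫ t in Ioi (0:ℝ), (exp (-(x * t)) - exp (-((x+1) * t))) from
        setIntegral_congr_fun measurableSet_Ioi (fun t ht => by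
          have ht' : 0 < t := mem_Ioi.mp ht
          have he : exp (-((x+1) * t)) = exp (-(x * t)) * exp (-t) := by
            rw [← exp_add]; ring_nf
          rw [he]
          unfold wfun
          field_simp)]
      rw [integral_sub (integrableOn_exp hx) (integrableOn_exp (by linarith : (0:ℝ) < x+1)),
        integral_exp_Ioi hx, integral_exp_Ioi (by linarith : (0:ℝ) < x+1)]
    rw [hval] at key
    exact key.2
  · rw [ae_restrict_iff' measurableSet_Ioi]
    apply Eventually.of_forall
    intro t ht y hy
    have ht' : 0 < t := mem_Ioi.mp ht
    rw [norm_neg]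
    calc ‖t * exp (-(y * t)) * wfun t‖ ≤ t ^ 1 * exp (-(y * t)) := by
          have := wkernel_bound (x := y) 1 ht'
          simpa using this
      _ ≤ t ^ 1 * exp (-(x/2 * t)) := by
          apply mul_le_mul_of_nonneg_left _ (pow_nonneg ht'.le _)
          apply exp_le_exp.mpr
          nlinarith [hb y hy]
  · rw [ae_restrict_iff' measurableSet_Ioi]
    apply Eventually.of_forall
    intro t _ y _
    have h1 : HasDerivAt (fun y : ℝ => -(y * t)) (-t) y := by
      simpa using ((hasDerivAt_id y).mul_const t).fun_neg
    have h2 : HasDerivAt (fun y : ℝ => exp (-(y * t))) (exp (-(y*t)) * (-t)) y :=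
      (Real.hasDerivAt_exp _).comp y h1
    have h3 : HasDerivAt (fun y : ℝ => exp (-(y * t)) * wfun t)
        ((exp (-(y*t)) * (-t)) * wfun t) y := h2.mul_const (wfun t)
    exact h3.congr_deriv (by ring)

lemma J_nonneg {x : ℝ} (hx : 0 < x) : 0 ≤ J x := by
  apply setIntegral_nonneg measurableSet_Ioi
  intro t ht
  exact mul_nonneg (exp_pos _).le (wfun_nonneg (mem_Ioi.mp ht))

lemma J_le {x : ℝ} (hx : 0 < x) : J x ≤ 1/x := by
  rw [← integral_exp_Ioi hx]
  apply setIntegral_mono_on (by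
    have := integrableOn_wkernel hx 0
    simpa using this) (integrableOn_exp hx) measurableSet_Ioi
  intro t ht
  have ht' : 0 < t := mem_Ioi.mp ht
  nlinarith [wfun_le_one ht', exp_pos (-(x*t))]

lemma J_eq {x : ℝ} (hx : 0 < x) : J x = log (x+1) - log x := by
  set R : ℝ → ℝ := fun y => J y - (log (y+1) - log y) with hR
  have hRd : ∀ y : ℝ, 0 < y → HasDerivAt R 0 y := by
    intro y hy
    have h1 : HasDerivAt (fun y : ℝ => log (y+1)) (1/(y+1)) y := by
      have := ((hasDerivAt_id y).add_const 1).log (by intro h; simp at h; linarith)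
      simpa using this
    have h2 : HasDerivAt Real.log y⁻¹ y := Real.hasDerivAt_log (ne_of_gt hy)
    have h3 := (hasDerivAt_J hy).fun_sub (h1.fun_sub h2)
    exact h3.congr_deriv (by ring)
  have hconst : ∀ y : ℝ, x ≤ y → R y = R x := by
    intro y hxy
    rcases eq_or_lt_of_le hxy with h | h
    · rw [h]
    · obtain ⟨c, hc, hc2⟩ := exists_deriv_eq_slope R h
        (fun z hz => (hRd z (lt_of_lt_of_le hx hz.1)).differentiableAt.continuousAt.continuousWithinAt)
        (fun z hz => (hRd z (lt_of_lt_of_le hx hz.1.le)).differentiableAt.differentiableWithinAt)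
      rw [(hRd c (lt_of_lt_of_le hx hc.1.le)).deriv] at hc2
      have := hc2.symm
      rw [div_eq_zero_iff] at this
      rcases this with h' | h'
      · linarith [sub_eq_zero.mp h']
      · linarith [sub_eq_zero.mp h']
  have hlim : Tendsto R atTop (𝓝 0) := by
    have hJ : Tendsto J atTop (𝓝 0) := by
      apply squeeze_zero' (Eventually.mono (eventually_gt_atTop 0) (fun y hy => J_nonneg hy))
        (Eventually.mono (eventually_gt_atTop 0) (fun y hy => J_le hy))
      exact Tendsto.congr (fun y => (one_div y).symm) tendsto_inv_atTop_zero
    have hlog : Tendsto (fun y : ℝ => log (y+1) - log y) atTop (𝓝 0) := by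
      have h1 : Tendsto (fun y : ℝ => 1 + 1/y) atTop (𝓝 1) := by
        have := tendsto_one_div_atTop_nhds_zero_nat (𝕜 := ℝ)
        have h0 : Tendsto (fun y : ℝ => 1/y) atTop (𝓝 0) := by
          simp only [one_div]; exact tendsto_inv_atTop_zero
        simpa using (tendsto_const_nhds (x := (1:ℝ))).add h0
      have h2 := (Real.continuousAt_log one_ne_zero).tendsto.comp h1
      rw [Real.log_one] at h2
      apply Tendsto.congr' _ h2
      filter_upwards [eventually_gt_atTop (0:ℝ)] with y hy
      show log (1 + 1/y) = log (y+1) - log y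
      rw [show (1:ℝ) + 1/y = (y+1)/y by field_simp, Real.log_div (by linarith) (ne_of_gt hy)]
    simpa using hJ.sub hlog
  have h2 : Tendsto R atTop (𝓝 (R x)) := by
    apply Tendsto.congr' _ (tendsto_const_nhds (α := ℝ) (f := atTop))
    filter_upwards [eventually_ge_atTop x] with y hy
    exact (hconst y hy).symm
  have h3 := tendsto_nhds_unique h2 hlim
  have : R x = 0 := h3
  rw [hR] at this
  simp only at this
  linarith


lemma Fn0_sub {x : ℝ} (hx : 0 < x) :
    Fn 0 x - Fn 0 (x+1) = 1/x - (log (x+1) - log x) := by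
  have hx1 : (0:ℝ) < x+1 := by linarith
  have h1 : Fn 0 x - Fn 0 (x+1)
      = ∫ t in Ioi (0:ℝ), (t^0 * exp (-(x*t)) * phi t - t^0 * exp (-((x+1)*t)) * phi t) := by
    rw [Fn, Fn, ← integral_sub (integrableOn_kernel hx 0) (integrableOn_kernel hx1 0)]
  have h2 : ∀ t ∈ Ioi (0:ℝ), t^0 * exp (-(x*t)) * phi t - t^0 * exp (-((x+1)*t)) * phi t
      = exp (-(x*t)) - exp (-(x*t)) * wfun t := by
    intro t ht
    have ht' : 0 < t := mem_Ioi.mp ht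
    have hu := (one_sub_exp_pos ht').ne'
    have he : exp (-((x+1) * t)) = exp (-(x * t)) * exp (-t) := by rw [← exp_add]; ring_nf
    rw [pow_zero, one_mul, one_mul, he]
    unfold phi wfun
    field_simp
  rw [h1, setIntegral_congr_fun measurableSet_Ioi h2,
    integral_sub (integrableOn_exp hx) (by have h := integrableOn_wkernel hx 0; simp only [pow_zero, one_mul] at h; exact h),
    integral_exp_Ioi hx]
  have : (∫ t in Ioi (0:ℝ), exp (-(x*t)) * wfun t) = J x := rfl
  rw [this, J_eq hx]

lemma Fn0_nonneg {x : ℝ} (hx : 0 < x) : 0 ≤ Fn 0 x := by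
  apply setIntegral_nonneg measurableSet_Ioi
  intro t ht
  have ht' : 0 < t := mem_Ioi.mp ht
  have := phi_nonneg ht'
  positivity

lemma Fn0_le {x : ℝ} (hx : 0 < x) : Fn 0 x ≤ 1/x := by
  rw [← integral_exp_Ioi hx]
  apply setIntegral_mono_on (integrableOn_kernel hx 0) (integrableOn_exp hx) measurableSet_Ioi
  intro t ht
  have ht' : 0 < t := mem_Ioi.mp ht
  have h := kernel_bound (x := x) 0 ht'
  rw [Real.norm_eq_abs] at h
  calc t^0 * exp (-(x*t)) * phi t ≤ |t^0 * exp (-(x*t)) * phi t| := le_abs_self _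
    _ ≤ t^0 * exp (-(x*t)) := h
    _ = exp (-(x*t)) := by rw [pow_zero, one_mul]

/-! ### The digamma function -/

def psi (x : ℝ) : ℝ := deriv Real.Gamma x / Real.Gamma x

lemma hasDerivAt_Gamma {x : ℝ} (hx : 0 < x) :
    HasDerivAt Real.Gamma (deriv Real.Gamma x) x :=
  (Real.differentiableAt_Gamma fun m =>
    ne_of_gt (lt_of_le_of_lt (neg_nonpos.mpr (Nat.cast_nonneg m)) hx)).hasDerivAt

lemma deriv_Gamma_add_one {x : ℝ} (hx : 0 < x) :
    deriv Real.Gamma (x+1) = Real.Gamma x + x * deriv Real.Gamma x := by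
  have heq : Real.Gamma =ᶠ[𝓝 (x+1)] fun y => (y-1) * Real.Gamma (y-1) := by
    filter_upwards [IsOpen.mem_nhds (isOpen_lt continuous_const continuous_id)
      (show (1:ℝ) < x+1 by linarith)] with y hy
    have hy' : (1:ℝ) < y := hy
    have h := Real.Gamma_add_one (s := y - 1) (by intro h0; rw [sub_eq_zero] at h0; simp [h0] at hy'; )
    rw [sub_add_cancel] at h
    exact h
  rw [heq.deriv_eq]
  have hsub : HasDerivAt (fun y : ℝ => y - 1) 1 (x+1) := (hasDerivAt_id _).sub_const 1
  have hGd : HasDerivAt Real.Gamma (deriv Real.Gamma x) x := hasDerivAt_Gamma hx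
  have hGd2 : HasDerivAt Real.Gamma (deriv Real.Gamma x) ((x+1)-1) := by
    rw [show (x+1)-1 = x by ring]; exact hGd
  have hGd' : HasDerivAt (fun y : ℝ => Real.Gamma (y - 1)) (deriv Real.Gamma x * 1) (x+1) := by
    have := hGd2.comp (x+1) hsub
    simpa [Function.comp_def] using this
  have hG : HasDerivAt (fun y : ℝ => (y-1) * Real.Gamma (y-1))
      (1 * Real.Gamma ((x+1)-1) + ((x+1)-1) * (deriv Real.Gamma x * 1)) (x+1) := by
    apply HasDerivAt.mul hsub
    simpa using hGd'
  rw [hG.deriv]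
  simp only [add_sub_cancel_right]
  ring

lemma psi_add_one {x : ℝ} (hx : 0 < x) : psi (x+1) = psi x + 1/x := by
  have hG := (Real.Gamma_pos_of_pos hx).ne'
  unfold psi
  rw [deriv_Gamma_add_one hx, Real.Gamma_add_one hx.ne']
  field_simp
  ring

lemma hasDerivAt_logGamma {x : ℝ} (hx : 0 < x) :
    HasDerivAt (Real.log ∘ Real.Gamma) (psi x) x :=
  (hasDerivAt_Gamma hx).log (Real.Gamma_pos_of_pos hx).ne'

lemma psi_le_log {x : ℝ} (hx : 0 < x) : psi x ≤ log x := by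
  have h := Real.convexOn_log_Gamma.le_slope_of_hasDerivAt (mem_Ioi.mpr hx)
    (mem_Ioi.mpr (by linarith : (0:ℝ) < x + 1)) (by linarith) (hasDerivAt_logGamma hx)
  rw [slope_def_field] at h
  have : (Real.log ∘ Real.Gamma) (x+1) = log x + (Real.log ∘ Real.Gamma) x := by
    simp only [Function.comp_apply]
    rw [Real.Gamma_add_one hx.ne', Real.log_mul hx.ne' (Real.Gamma_pos_of_pos hx).ne']
  rw [this] at h
  have h2 : x + 1 - x = 1 := by ring
  rw [h2, div_one] at h
  linarith

lemma log_le_psi {x : ℝ} (hx : 1 < x) : log (x-1) ≤ psi x := by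
  have hx0 : (0:ℝ) < x := by linarith
  have hx1 : (0:ℝ) < x - 1 := by linarith
  have h := Real.convexOn_log_Gamma.slope_le_of_hasDerivAt (mem_Ioi.mpr hx1)
    (mem_Ioi.mpr hx0) (by linarith) (hasDerivAt_logGamma hx0)
  rw [slope_def_field] at h
  have hGx : Real.Gamma x = (x-1) * Real.Gamma (x-1) := by
    have := Real.Gamma_add_one hx1.ne'
    rw [sub_add_cancel] at this
    exact this
  have : (Real.log ∘ Real.Gamma) x = log (x-1) + (Real.log ∘ Real.Gamma) (x-1) := by
    simp only [Function.comp_apply]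
    rw [hGx, Real.log_mul hx1.ne' (Real.Gamma_pos_of_pos hx1).ne']
  rw [this] at h
  have h2 : x - (x-1) = 1 := by ring
  rw [h2, div_one] at h
  linarith

lemma psi_log_tendsto : Tendsto (fun x => psi x - log x) atTop (𝓝 0) := by
  have hlog : Tendsto (fun y : ℝ => log (y-1) - log y) atTop (𝓝 0) := by
    have h0 : Tendsto (fun y : ℝ => 1/y) atTop (𝓝 0) := by
      exact Tendsto.congr (fun y => (one_div y).symm) tendsto_inv_atTop_zero
    have h1 : Tendsto (fun y : ℝ => 1 - 1/y) atTop (𝓝 1) := by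
      simpa using (tendsto_const_nhds (x := (1:ℝ))).sub h0
    have h2 := (Real.continuousAt_log one_ne_zero).tendsto.comp h1
    rw [Real.log_one] at h2
    apply Tendsto.congr' _ h2
    filter_upwards [eventually_gt_atTop (1:ℝ)] with y hy
    show log (1 - 1/y) = log (y-1) - log y
    rw [show (1:ℝ) - 1/y = (y-1)/y by field_simp,
      Real.log_div (by intro h0'; rw [sub_eq_zero] at h0'; simp [h0'] at hy) (by positivity)]
  apply tendsto_of_tendsto_of_tendsto_of_le_of_le' hlog tendsto_const_nhds
  · filter_upwards [eventually_gt_atTop (1:ℝ)] with y hy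
    have := log_le_psi hy
    linarith
  · filter_upwards [eventually_gt_atTop (1:ℝ)] with y hy
    have := psi_le_log (by linarith : (0:ℝ) < y)
    linarith

lemma psi_eq {x : ℝ} (hx : 0 < x) : log x - psi x = Fn 0 x := by
  set D : ℝ → ℝ := fun y => psi y - (log y - Fn 0 y) with hD
  have hstep : ∀ y : ℝ, 0 < y → D (y+1) = D y := by
    intro y hy
    have h1 := psi_add_one hy
    have h2 := Fn0_sub hy
    simp only [hD]
    rw [h1]
    linarith
  have hDn : ∀ n : ℕ, D (x + n) = D x := by
    intro n
    induction n with
    | zero => simp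
    | succ m ih =>
      have : x + (m+1 : ℕ) = (x + m) + 1 := by push_cast; ring
      rw [this, hstep _ (by positivity), ih]
  have hDlim : Tendsto D atTop (𝓝 0) := by
    have hF : Tendsto (fun y => Fn 0 y) atTop (𝓝 0) := by
      apply squeeze_zero' (Eventually.mono (eventually_gt_atTop 0) (fun y hy => Fn0_nonneg hy))
        (Eventually.mono (eventually_gt_atTop 0) (fun y hy => Fn0_le hy))
      exact Tendsto.congr (fun y => (one_div y).symm) tendsto_inv_atTop_zero
    have h2 : Tendsto (fun y => (psi y - log y) + Fn 0 y) atTop (𝓝 (0+0)) :=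
      psi_log_tendsto.add hF
    rw [add_zero] at h2
    apply Tendsto.congr _ h2
    intro y
    simp only [hD]
    ring
  have hseq : Tendsto (fun n : ℕ => D (x + n)) atTop (𝓝 0) :=
    hDlim.comp (tendsto_atTop_add_const_left atTop x tendsto_natCast_atTop_atTop)
  have hconst : Tendsto (fun n : ℕ => D (x + n)) atTop (𝓝 (D x)) := by
    apply Tendsto.congr (fun n => (hDn n).symm) tendsto_const_nhds
  have h0 : D x = 0 := tendsto_nhds_unique hconst hseq
  simp only [hD] at h0
  linarith


/-! ### Smoothness -/

lemma analyticAt_Gamma {x : ℝ} (hx : 0 < x) : AnalyticAt ℝ Real.Gamma x := by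
  have hC : AnalyticAt ℂ Complex.Gamma (x : ℂ) := by
    apply DifferentiableOn.analyticAt (s := {z : ℂ | 0 < z.re})
    · intro z hz
      refine (Complex.differentiableAt_Gamma z (fun m => ?_)).differentiableWithinAt
      intro h
      rw [h] at hz
      simp only [mem_setOf_eq, Complex.neg_re, Complex.natCast_re] at hz
      have : (0:ℝ) ≤ m := Nat.cast_nonneg m
      linarith
    · exact IsOpen.mem_nhds (isOpen_lt continuous_const Complex.continuous_re)
        (by simpa using hx)
  have h1 : AnalyticAt ℝ (fun y : ℝ => Complex.Gamma (y : ℂ)) x :=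
    (hC.restrictScalars (𝕜 := ℝ)).comp (Complex.ofRealCLM.analyticAt x)
  have h2 : AnalyticAt ℝ (fun y : ℝ => (Complex.Gamma (y : ℂ)).re) x :=
    (Complex.reCLM.analyticAt _).comp h1
  have h3 : (fun y : ℝ => (Complex.Gamma (y : ℂ)).re) = Real.Gamma := by
    funext y
    rw [Complex.Gamma_ofReal, Complex.ofReal_re]
  rwa [h3] at h2

lemma analyticAt_deriv_Gamma {x : ℝ} (hx : 0 < x) : AnalyticAt ℝ (deriv Real.Gamma) x := by
  have h : AnalyticOnNhd ℝ Real.Gamma (Ioi 0) := fun y hy => analyticAt_Gamma (mem_Ioi.mp hy)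
  exact h.deriv x (mem_Ioi.mpr hx)

lemma contDiffOn_main :
    ContDiffOn ℝ (⊤ : ℕ∞) (fun x => x * (Real.log x - psi x)) (Ioi 0) := by
  intro x hx
  have hx' : (0:ℝ) < x := mem_Ioi.mp hx
  apply ContDiffAt.contDiffWithinAt
  have h1 : ContDiffAt ℝ (⊤ : ℕ∞) Real.log x := Real.contDiffAt_log.mpr hx'.ne'
  have h2 : ContDiffAt ℝ (⊤ : ℕ∞) psi x :=
    ((analyticAt_deriv_Gamma hx').contDiffAt).div ((analyticAt_Gamma hx').contDiffAt)
      (Real.Gamma_pos_of_pos hx').ne'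
  exact contDiffAt_id.mul (h1.sub h2)

end AlzerAux

noncomputable def digamma (x : ℝ) : ℝ := deriv Real.Gamma x / Real.Gamma x

theorem alzer_cm :
    CompletelyMonotonicOn (fun x => x * (Real.log x - digamma x)) (Ioi 0) := by
  constructor
  · exact AlzerAux.contDiffOn_main
  · intro n x hx
    have hx' : (0:ℝ) < x := mem_Ioi.mp hx
    have heq : (fun x => x * (Real.log x - digamma x)) =ᶠ[𝓝 x] AlzerAux.f0 := by
      filter_upwards [IsOpen.mem_nhds isOpen_Ioi hx] with y hy
      show y * (Real.log y - digamma y) = AlzerAux.f0 y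
      unfold AlzerAux.f0
      rw [show digamma y = AlzerAux.psi y from rfl, ← AlzerAux.psi_eq (mem_Ioi.mp hy)]
    rw [Filter.EventuallyEq.iteratedDeriv_eq n heq]
    rw [AlzerAux.iteratedDeriv_f0 n x hx]
    rw [show (-1:ℝ)^n * ((-1)^n * (x * AlzerAux.Fn n x - n * AlzerAux.Fn (n-1) x))
        = x * AlzerAux.Fn n x - n * AlzerAux.Fn (n-1) x by
      rw [← mul_assoc, ← mul_pow]; simp]
    cases n with
    | zero =>
      simp only [Nat.cast_zero, zero_mul, sub_zero]
      exact mul_nonneg hx'.le (AlzerAux.Fn0_nonneg hx')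
    | succ m =>
      have h := AlzerAux.sign_key hx' m
      have hc : ((m+1 : ℕ) : ℝ) = (m:ℝ) + 1 := by push_cast; ring
      rw [show (m+1) - 1 = m from rfl, hc]
      linarith
end
end

section
/- For each α ≤ 1, the function θ_α(x) = x^α (log x − ψ(x)) is completely monotonic on (0,∞). -/
noncomputable section
open Real Set
open MeasureTheory Filter

/-- The kernel `φ t = 1/(1-e^{-t}) - 1/t`. -/
noncomputable def phi (t : ℝ) : ℝ := (1 - rexp (-t))⁻¹ - t⁻¹

lemma one_sub_exp_pos {t : ℝ} (ht : 0 < t) : 0 < 1 - rexp (-t) := by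
  have : rexp (-t) < 1 := exp_lt_one_iff.mpr (by linarith)
  linarith

lemma one_sub_exp_le {t : ℝ} : 1 - rexp (-t) ≤ t := by
  have := Real.add_one_le_exp (-t)
  linarith

lemma phi_nonneg {t : ℝ} (ht : 0 < t) : 0 ≤ phi t := by
  have h1 := one_sub_exp_pos ht
  have h2 : t⁻¹ ≤ (1 - rexp (-t))⁻¹ := by
    apply inv_anti₀ h1 one_sub_exp_le
  simpa [phi] using sub_nonneg.mpr h2

lemma phi_le_one {t : ℝ} (ht : 0 < t) : phi t ≤ 1 := by
  have h1 := one_sub_exp_pos ht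
  set u := rexp (-t) with hu
  have hu0 : 0 < u := exp_pos _
  have h2 : u * (t + 1) ≤ 1 := by
    have h3 : t + 1 ≤ rexp t := Real.add_one_le_exp t
    have h4 : u * (t + 1) ≤ u * rexp t := by nlinarith
    rwa [← Real.exp_add, neg_add_cancel, Real.exp_zero] at h4
  have key : 1 ≤ (1 + t⁻¹) * (1 - u) := by
    have h5 : t⁻¹ * t = 1 := inv_mul_cancel₀ ht.ne'
    have h6 : 0 < t⁻¹ := inv_pos.mpr ht
    nlinarith
  have : (1 - u)⁻¹ ≤ 1 + t⁻¹ := by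
    rw [inv_eq_one_div, div_le_iff₀ h1]
    linarith
  simp only [phi, ← hu]
  have h7 : 0 < t⁻¹ := inv_pos.mpr ht
  linarith

lemma hasDerivAt_phi {t : ℝ} (ht : 0 < t) :
    HasDerivAt phi ((t ^ 2)⁻¹ - rexp (-t) / (1 - rexp (-t)) ^ 2) t := by
  have h1 : HasDerivAt (fun s : ℝ => 1 - rexp (-s)) (rexp (-t)) t := by
    have : HasDerivAt (fun s : ℝ => rexp (-s)) (rexp (-t) * (-1)) t :=
      (hasDerivAt_neg t).exp
    simpa using (this.const_sub 1)
  have h2 : HasDerivAt (fun s : ℝ => (1 - rexp (-s))⁻¹)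
      (-(rexp (-t)) / (1 - rexp (-t)) ^ 2) t := h1.inv (one_sub_exp_pos ht).ne'
  have h3 : HasDerivAt (fun s : ℝ => s⁻¹) (-(t ^ 2)⁻¹) t := hasDerivAt_inv ht.ne'
  have := h2.sub h3
  refine this.congr_deriv (Eq.symm ?_)
  ring

lemma phi_deriv_nonneg {t : ℝ} (ht : 0 < t) :
    0 ≤ (t ^ 2)⁻¹ - rexp (-t) / (1 - rexp (-t)) ^ 2 := by
  have h1 := one_sub_exp_pos ht
  -- key : exp (-t) * t^2 ≤ (1 - exp (-t))^2
  have key : rexp (-t) * t ^ 2 ≤ (1 - rexp (-t)) ^ 2 := by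
    set a := rexp (-(t / 2)) with ha
    have ha0 : 0 < a := exp_pos _
    have haa : a * a = rexp (-t) := by
      rw [ha, ← Real.exp_add]; ring_nf
    have hsinh : t / 2 < Real.sinh (t / 2) := Real.self_lt_sinh_iff.mpr (by linarith)
    have hsinh' : Real.sinh (t / 2) = (rexp (t / 2) - a) / 2 := by
      rw [Real.sinh_eq, ha]
    have hinv : rexp (t / 2) * a = 1 := by
      rw [ha, ← Real.exp_add]; ring_nf; exact Real.exp_zero
    -- so 1 - a^2 = a * (exp(t/2) - a) > a * t
    have h2 : t * a < 1 - a * a := by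
      have h3 : t < rexp (t / 2) - a := by
        rw [hsinh'] at hsinh; linarith
      have h4 : a * t < a * (rexp (t / 2) - a) := by nlinarith
      nlinarith
    have h5 : 0 ≤ t * a := by positivity
    have h6 : (t * a) ^ 2 ≤ (1 - a * a) ^ 2 := by nlinarith
    have h7 : 1 - a * a = 1 - rexp (-t) := by rw [haa]
    nlinarith [haa]
  have ht2 : (0:ℝ) < t ^ 2 := by positivity
  have h8 : rexp (-t) / (1 - rexp (-t)) ^ 2 ≤ (t ^ 2)⁻¹ := by
    rw [div_le_iff₀ (by positivity), inv_eq_one_div, div_mul_eq_mul_div, le_div_iff₀ ht2]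
    nlinarith
  linarith

lemma phi_mono {s t : ℝ} (hs : 0 < s) (hst : s ≤ t) : phi s ≤ phi t := by
  have hmono : MonotoneOn phi (Ioi 0) := by
    apply monotoneOn_of_deriv_nonneg (convex_Ioi 0)
    · intro x hx
      exact (hasDerivAt_phi hx).continuousAt.continuousWithinAt
    · intro x hx
      rw [interior_Ioi] at hx
      exact (hasDerivAt_phi hx).differentiableAt.differentiableWithinAt
    · intro x hx
      rw [interior_Ioi] at hx
      rw [(hasDerivAt_phi hx).deriv]
      exact phi_deriv_nonneg hx
  exact hmono hs (lt_of_lt_of_le hs hst) hst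

lemma continuousOn_phi : ContinuousOn phi (Ioi 0) := fun x hx =>
  (hasDerivAt_phi hx).continuousAt.continuousWithinAt



lemma integrableOn_K {n : ℕ} {x : ℝ} (hx : 0 < x) :
    IntegrableOn (fun t : ℝ => t ^ n * rexp (-(x * t))) (Ioi 0) := by
  apply integrable_of_isBigO_exp_neg (b := x / 2) (by positivity)
  · exact (continuous_pow n).continuousOn.mul
      (Real.continuous_exp.comp (continuous_const.mul continuous_id').neg).continuousOn
  · rw [Asymptotics.isBigO_iff]
    refine ⟨1, ?_⟩
    have h := tendsto_rpow_mul_exp_neg_mul_atTop_nhds_zero (n : ℝ) (x / 2) (by positivity)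
    have h2 : ∀ᶠ t : ℝ in atTop, |t ^ n * rexp (-(x / 2 * t))| ≤ 1 := by
      have := h.eventually (eventually_le_nhds (by norm_num : (0:ℝ) < 1))
      filter_upwards [this, eventually_ge_atTop (0:ℝ)] with t h1 h1'
      rw [abs_of_nonneg (by positivity)]
      rw [neg_mul] at h1
      rwa [Real.rpow_natCast] at h1
    filter_upwards [h2, eventually_ge_atTop (0:ℝ)] with t h1 h1'
    have habs : |t ^ n * rexp (-(x / 2 * t))| = t ^ n * rexp (-(x / 2 * t)) :=
      abs_of_nonneg (by positivity)
    rw [habs] at h1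
    have hxt : rexp (-(x * t)) = rexp (-(x / 2 * t)) * rexp (-(x / 2 * t)) := by
      rw [← Real.exp_add]; ring_nf
    rw [Real.norm_eq_abs, Real.norm_eq_abs, one_mul,
      abs_of_nonneg (by positivity : (0:ℝ) ≤ t ^ n * rexp (-(x * t))),
      abs_of_nonneg (le_of_lt (exp_pos _)), hxt, ← mul_assoc]
    calc t ^ n * rexp (-(x / 2 * t)) * rexp (-(x / 2 * t))
        ≤ 1 * rexp (-(x / 2 * t)) := mul_le_mul_of_nonneg_right h1 (le_of_lt (exp_pos _))
      _ = rexp (-(x / 2) * t) := by rw [one_mul, neg_mul]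


lemma aesm_K_phi {n : ℕ} {x : ℝ} :
    AEStronglyMeasurable (fun t : ℝ => t ^ n * rexp (-(x * t)) * phi t)
      (volume.restrict (Ioi 0)) := by
  apply ContinuousOn.aestronglyMeasurable _ measurableSet_Ioi
  exact (((continuous_pow n).continuousOn.mul
    (Real.continuous_exp.comp (continuous_const.mul continuous_id').neg).continuousOn).mul
    continuousOn_phi)

lemma integrableOn_K_phi {n : ℕ} {x : ℝ} (hx : 0 < x) :
    IntegrableOn (fun t : ℝ => t ^ n * rexp (-(x * t)) * phi t) (Ioi 0) := by
  apply Integrable.mono' (integrableOn_K hx) aesm_K_phi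
  rw [ae_restrict_iff' measurableSet_Ioi]
  filter_upwards with t ht
  rw [norm_mul, norm_mul]
  have h1 : 0 ≤ t := le_of_lt ht
  rw [Real.norm_eq_abs, Real.norm_eq_abs, Real.norm_eq_abs,
    abs_of_nonneg (by positivity : (0:ℝ) ≤ t ^ n), abs_of_nonneg (le_of_lt (exp_pos _)),
    abs_of_nonneg (phi_nonneg ht)]
  calc t ^ n * rexp (-(x * t)) * phi t ≤ t ^ n * rexp (-(x * t)) * 1 := by
        apply mul_le_mul_of_nonneg_left (phi_le_one ht) (by positivity)
    _ = t ^ n * rexp (-(x * t)) := mul_one _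

/-- Iterated Laplace-transform integrals of `phi`. -/
noncomputable def Gn (n : ℕ) (x : ℝ) : ℝ := ∫ t in Ioi (0:ℝ), t ^ n * rexp (-(x * t)) * phi t

lemma Gn_nonneg {n : ℕ} {x : ℝ} : 0 ≤ Gn n x := by
  apply setIntegral_nonneg measurableSet_Ioi
  intro t ht
  have ht' : 0 < t := ht
  have := phi_nonneg ht'
  positivity

lemma hasDerivAt_Gn (n : ℕ) {x : ℝ} (hx : 0 < x) :
    HasDerivAt (Gn n) (-Gn (n + 1) x) x := by
  have key := hasDerivAt_integral_of_dominated_loc_of_deriv_le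
    (F := fun y t => t ^ n * rexp (-(y * t)) * phi t)
    (F' := fun y t => -(t ^ (n + 1) * rexp (-(y * t)) * phi t))
    (x₀ := x) (s := Metric.ball x (x / 2)) (μ := volume.restrict (Ioi 0))
    (bound := fun t => t ^ (n + 1) * rexp (-(x / 2 * t)))
    (Metric.ball_mem_nhds x (by positivity))
    (Filter.Eventually.of_forall fun y => aesm_K_phi)
    (integrableOn_K_phi hx)
    (by exact (aesm_K_phi (n := n+1) (x := x)).neg)
    ?_ ?_ ?_
  · have h2 : (∫ t in Ioi (0:ℝ), -(t ^ (n+1) * rexp (-(x * t)) * phi t)) = -Gn (n+1) x := by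
      rw [integral_neg]; rfl
    rw [← h2]
    exact key.2
  · rw [ae_restrict_iff' measurableSet_Ioi]
    filter_upwards with t ht
    have ht' : 0 < t := ht
    intro y hy
    rw [Metric.mem_ball, Real.dist_eq, abs_lt] at hy
    have hy2 : x / 2 ≤ y := by linarith
    rw [norm_neg, norm_mul, norm_mul, Real.norm_eq_abs, Real.norm_eq_abs, Real.norm_eq_abs,
      abs_of_nonneg (by positivity : (0:ℝ) ≤ t ^ (n+1)), abs_of_nonneg (le_of_lt (exp_pos _)),
      abs_of_nonneg (phi_nonneg ht')]
    calc t ^ (n+1) * rexp (-(y * t)) * phi t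
        ≤ t ^ (n+1) * rexp (-(y * t)) * 1 :=
          mul_le_mul_of_nonneg_left (phi_le_one ht') (by positivity)
      _ = t ^ (n+1) * rexp (-(y * t)) := mul_one _
      _ ≤ t ^ (n+1) * rexp (-(x / 2 * t)) := by
          apply mul_le_mul_of_nonneg_left _ (by positivity)
          apply Real.exp_le_exp.mpr
          have : x / 2 * t ≤ y * t := mul_le_mul_of_nonneg_right hy2 (le_of_lt ht')
          linarith
  · exact integrableOn_K (half_pos hx)
  · rw [ae_restrict_iff' measurableSet_Ioi]
    filter_upwards with t ht
    intro y hy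
    have h1 : HasDerivAt (fun z : ℝ => -(z * t)) (-t) y := by
      exact (((hasDerivAt_id y).mul_const t).neg).congr_deriv (by ring)
    have h2 : HasDerivAt (fun z : ℝ => rexp (-(z * t))) (rexp (-(y * t)) * -t) y := h1.exp
    have h3 := (h2.const_mul (t ^ n)).mul_const (phi t)
    refine h3.congr_deriv (Eq.symm ?_)
    ring


lemma int_K {n : ℕ} {x : ℝ} (hx : 0 < x) :
    ∫ t in Ioi (0:ℝ), t ^ n * rexp (-(x * t)) = (1 / x) ^ (n + 1) * (n.factorial : ℝ) := by
  have h := Real.integral_rpow_mul_exp_neg_mul_Ioi (a := (n:ℝ) + 1) (r := x)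
    (by positivity) hx
  have h1 : ∀ t ∈ Ioi (0:ℝ), t ^ ((n:ℝ) + 1 - 1) * rexp (-(x * t)) = t ^ n * rexp (-(x * t)) := by
    intro t ht
    rw [add_sub_cancel_right, Real.rpow_natCast]
  rw [setIntegral_congr_fun measurableSet_Ioi h1] at h
  rw [h]
  rw [show ((n:ℝ) + 1) = ((n + 1 : ℕ) : ℝ) by push_cast; ring, Real.rpow_natCast]
  norm_num [Real.Gamma_nat_eq_factorial]

lemma int_exp {x : ℝ} (hx : 0 < x) : ∫ t in Ioi (0:ℝ), rexp (-(x * t)) = 1 / x := by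
  have h := int_K (n := 0) hx
  simpa using h

lemma zero_sum {n : ℕ} (hn : 1 ≤ n) {x : ℝ} (hx : 0 < x) :
    x * ∫ t in Ioi (0:ℝ), t ^ n * rexp (-(x * t))
      = (n : ℝ) * ∫ t in Ioi (0:ℝ), t ^ (n - 1) * rexp (-(x * t)) := by
  obtain ⟨m, rfl⟩ := Nat.exists_eq_add_of_le hn
  rw [int_K hx, int_K hx]
  have h1 : 1 + m - 1 = m := by omega
  rw [h1]
  have hfact : ((1 + m).factorial : ℝ) = (1 + m) * (m.factorial : ℝ) := by
    rw [show 1 + m = m + 1 by ring, Nat.factorial_succ]; push_cast; ring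
  rw [hfact]
  have hx0 : x ≠ 0 := hx.ne'
  field_simp
  push_cast
  linear_combination ((1/x)^(m+1) * (1+(m:ℝ))) * mul_one_div_cancel hx0

/-- pointwise bound for the Frullani integrand -/
lemma frullani_ptwise {a b t : ℝ} (ha : 0 < a) (hab : a ≤ b) (ht : 0 < t) :
    0 ≤ (rexp (-(a * t)) - rexp (-(b * t))) / t ∧
      (rexp (-(a * t)) - rexp (-(b * t))) / t ≤ (b - a) * rexp (-(a * t)) := by
  have h1 : rexp (-(b * t)) = rexp (-(a * t)) * rexp (-((b - a) * t)) := by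
    rw [← Real.exp_add]; ring_nf
  have h2 : rexp (-((b - a) * t)) ≤ 1 :=
    Real.exp_le_one_iff.mpr (by nlinarith)
  have h3 : 1 - (b - a) * t ≤ rexp (-((b - a) * t)) := by
    have := Real.add_one_le_exp (-((b - a) * t)); linarith
  have hea : 0 < rexp (-(a * t)) := exp_pos _
  constructor
  · apply div_nonneg _ (le_of_lt ht)
    rw [h1]; nlinarith
  · rw [div_le_iff₀ ht, h1]
    nlinarith

lemma integrableOn_frullani {a b : ℝ} (ha : 0 < a) (hb : 0 < b) :
    IntegrableOn (fun t : ℝ => (rexp (-(a * t)) - rexp (-(b * t))) / t) (Ioi 0) := by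
  rcases le_total a b with hab | hab
  · apply Integrable.mono' ((exp_neg_integrableOn_Ioi 0 ha).const_mul (b - a))
    · apply ContinuousOn.aestronglyMeasurable _ measurableSet_Ioi
      apply ContinuousOn.div
      · exact ((Real.continuous_exp.comp (continuous_const.mul continuous_id').neg).sub
          (Real.continuous_exp.comp (continuous_const.mul continuous_id').neg)).continuousOn
      · exact continuousOn_id
      · intro t ht; exact ne_of_gt ht
    · rw [ae_restrict_iff' measurableSet_Ioi]
      filter_upwards with t ht
      obtain ⟨h0, h1⟩ := frullani_ptwise ha hab ht
      rw [Real.norm_eq_abs, abs_of_nonneg h0]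
      calc (rexp (-(a * t)) - rexp (-(b * t))) / t ≤ (b - a) * rexp (-(a * t)) := h1
        _ = (b - a) * rexp (-a * t) := by rw [neg_mul]
  · apply Integrable.mono' ((exp_neg_integrableOn_Ioi 0 hb).const_mul (a - b))
    · apply ContinuousOn.aestronglyMeasurable _ measurableSet_Ioi
      apply ContinuousOn.div
      · exact ((Real.continuous_exp.comp (continuous_const.mul continuous_id').neg).sub
          (Real.continuous_exp.comp (continuous_const.mul continuous_id').neg)).continuousOn
      · exact continuousOn_id
      · intro t ht; exact ne_of_gt ht
    · rw [ae_restrict_iff' measurableSet_Ioi]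
      filter_upwards with t ht
      obtain ⟨h0, h1⟩ := frullani_ptwise hb hab ht
      have hneg : (rexp (-(a * t)) - rexp (-(b * t))) / t
          = -((rexp (-(b * t)) - rexp (-(a * t))) / t) := by ring
      rw [Real.norm_eq_abs, hneg, abs_neg, abs_of_nonneg h0]
      calc (rexp (-(b * t)) - rexp (-(a * t))) / t ≤ (a - b) * rexp (-(b * t)) := h1
        _ = (a - b) * rexp (-b * t) := by rw [neg_mul]

noncomputable def xi (a : ℝ) (y : ℝ) : ℝ :=
  ∫ t in Ioi (0:ℝ), (rexp (-(a * t)) - rexp (-(y * t))) / t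

lemma aesm_frullani {a y : ℝ} : AEStronglyMeasurable
    (fun t : ℝ => (rexp (-(a * t)) - rexp (-(y * t))) / t) (volume.restrict (Ioi 0)) := by
  apply ContinuousOn.aestronglyMeasurable _ measurableSet_Ioi
  apply ContinuousOn.div
  · exact ((Real.continuous_exp.comp (continuous_const.mul continuous_id').neg).sub
      (Real.continuous_exp.comp (continuous_const.mul continuous_id').neg)).continuousOn
  · exact continuousOn_id
  · intro t ht; exact ne_of_gt ht

lemma hasDerivAt_xi {a : ℝ} (ha : 0 < a) {y : ℝ} (hy : 0 < y) :
    HasDerivAt (xi a) (1 / y) y := by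
  have key := hasDerivAt_integral_of_dominated_loc_of_deriv_le
    (F := fun z t => (rexp (-(a * t)) - rexp (-(z * t))) / t)
    (F' := fun z t => rexp (-(z * t)))
    (x₀ := y) (s := Metric.ball y (y / 2)) (μ := volume.restrict (Ioi 0))
    (bound := fun t => rexp (-(y / 2 * t)))
    (Metric.ball_mem_nhds y (by positivity))
    (Filter.Eventually.of_forall fun z => aesm_frullani)
    (integrableOn_frullani ha hy)
    (by
      apply ContinuousOn.aestronglyMeasurable _ measurableSet_Ioi
      exact (Real.continuous_exp.comp (continuous_const.mul continuous_id').neg).continuousOn)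
    ?_ ?_ ?_
  · have h2 : (∫ t in Ioi (0:ℝ), rexp (-(y * t))) = 1 / y := int_exp hy
    rw [← h2]
    exact key.2
  · rw [ae_restrict_iff' measurableSet_Ioi]
    filter_upwards with t ht
    intro z hz
    rw [Metric.mem_ball, Real.dist_eq, abs_lt] at hz
    have hz2 : y / 2 ≤ z := by linarith
    rw [Real.norm_eq_abs, abs_of_nonneg (le_of_lt (exp_pos _))]
    apply Real.exp_le_exp.mpr
    have : y / 2 * t ≤ z * t := mul_le_mul_of_nonneg_right hz2 (le_of_lt ht)
    linarith
  · simpa [neg_mul, IntegrableOn] using exp_neg_integrableOn_Ioi (0:ℝ) (show (0:ℝ) < y / 2 by positivity)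
  · rw [ae_restrict_iff' measurableSet_Ioi]
    filter_upwards with t ht
    intro z hz
    have h1 : HasDerivAt (fun w : ℝ => -(w * t)) (-t) z := by
      exact (((hasDerivAt_id z).mul_const t).neg).congr_deriv (by ring)
    have h2 : HasDerivAt (fun w : ℝ => rexp (-(w * t))) (rexp (-(z * t)) * -t) z := h1.exp
    have h3 : HasDerivAt (fun w : ℝ => (rexp (-(a * t)) - rexp (-(w * t))) / t)
        (-(rexp (-(z * t)) * -t) / t) z := (h2.const_sub _).div_const t
    refine h3.congr_deriv (Eq.symm ?_)
    have ht' : (t:ℝ) ≠ 0 := ne_of_gt ht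
    field_simp

lemma xi_eq_log {x : ℝ} (hx : 0 < x) : xi x (x + 1) = Real.log (x + 1) - Real.log x := by
  -- the function y ↦ xi x y - log y is constant on [x, x+1]
  have key : ∀ z ∈ Icc x (x + 1), (fun y => xi x y - Real.log y) z
      = (fun y => xi x y - Real.log y) x := by
    apply constant_of_has_deriv_right_zero
    · intro z hz
      have hz0 : 0 < z := lt_of_lt_of_le hx hz.1
      exact ((hasDerivAt_xi hx hz0).sub (Real.hasDerivAt_log hz0.ne')).continuousAt.continuousWithinAt
    · intro z hz
      have hz0 : 0 < z := lt_of_lt_of_le hx hz.1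
      have h := (hasDerivAt_xi hx hz0).sub (Real.hasDerivAt_log hz0.ne')
      have h0 : (1 / z - z⁻¹ : ℝ) = 0 := by rw [one_div]; ring
      rw [h0] at h
      exact h.hasDerivWithinAt
  have h1 := key (x + 1) (by constructor <;> linarith)
  have h2 : xi x x = 0 := by
    have : ∀ t ∈ Ioi (0:ℝ), (rexp (-(x * t)) - rexp (-(x * t))) / t = 0 := by
      intro t ht; simp
    rw [xi, setIntegral_congr_fun measurableSet_Ioi this]
    simp
  simp only at h1
  rw [h2] at h1
  linarith


lemma analyticAt_complexGamma {z : ℂ} (hz : 0 < z.re) : AnalyticOnNhd ℂ Complex.Gamma {w : ℂ | 0 < w.re} := by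
  refine DifferentiableOn.analyticOnNhd (fun w hw => ?_) (isOpen_lt continuous_const Complex.continuous_re)
  refine (Complex.differentiableAt_Gamma w fun m => ?_).differentiableWithinAt
  intro h
  rw [h] at hw
  simp only [mem_setOf_eq] at hw
  rw [Complex.neg_re, Complex.natCast_re] at hw
  have : (0:ℝ) ≤ m := Nat.cast_nonneg m
  linarith

lemma analyticAt_realGamma {x : ℝ} (hx : 0 < x) : AnalyticAt ℝ Real.Gamma x := by
  have h : Real.Gamma = fun y : ℝ => (Complex.Gamma (Complex.ofRealCLM y)).re := by
    ext y; rw [Complex.ofRealCLM_apply, Complex.Gamma_ofReal, Complex.ofReal_re]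
  rw [h]
  have h1 : AnalyticAt ℂ Complex.Gamma (Complex.ofRealCLM x) :=
    analyticAt_complexGamma (z := x) (by simpa using hx) _ (by simpa using hx)
  exact (Complex.reCLM.analyticAt _).comp ((h1.restrictScalars).comp (Complex.ofRealCLM.analyticAt x))

lemma analyticAt_derivGamma {x : ℝ} (hx : 0 < x) : AnalyticAt ℝ (deriv Real.Gamma) x := by
  have key : ∀ y : ℝ, 0 < y → deriv Real.Gamma y = (deriv Complex.Gamma (Complex.ofRealCLM y)).re := by
    intro y hy
    have hd : HasDerivAt Real.Gamma ((deriv Complex.Gamma (y:ℂ)).re) y := by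
      have : DifferentiableAt ℂ Complex.Gamma (y:ℂ) := by
        refine Complex.differentiableAt_Gamma _ fun m => ?_
        intro h
        have := congrArg Complex.re h
        simp only [Complex.ofReal_re, Complex.neg_re, Complex.natCast_re] at this
        have h0 : (0:ℝ) ≤ m := Nat.cast_nonneg m
        linarith
      exact this.hasDerivAt.real_of_complex
    simpa using hd.deriv
  have h1 : AnalyticAt ℝ (fun y : ℝ => (deriv Complex.Gamma (Complex.ofRealCLM y)).re) x := by
    have hG : AnalyticAt ℂ (deriv Complex.Gamma) (Complex.ofRealCLM x) := by
      have := (analyticAt_complexGamma (z := (x:ℂ)) (by simpa using hx)).deriv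
      exact this _ (by simpa using hx)
    exact (Complex.reCLM.analyticAt _).comp ((hG.restrictScalars).comp (Complex.ofRealCLM.analyticAt x))
  refine h1.congr ?_
  have hmem : Ioi (0:ℝ) ∈ nhds x := Ioi_mem_nhds hx
  filter_upwards [hmem] with y hy
  exact (key y hy).symm

lemma contDiffAt_digamma {x : ℝ} (hx : 0 < x) : ContDiffAt ℝ (⊤ : ℕ∞) digamma x := by
  have h1 : AnalyticAt ℝ digamma x :=
    ((analyticAt_derivGamma hx).div (analyticAt_realGamma hx) (Real.Gamma_pos_of_pos hx).ne')
  exact h1.contDiffAt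

lemma gamma_ne_neg_nat {x : ℝ} (hx : 0 < x) : ∀ m : ℕ, x ≠ -m := by
  intro m h
  have : (0:ℝ) ≤ m := Nat.cast_nonneg m
  rw [h] at hx
  linarith

lemma hasDerivAt_realGamma {x : ℝ} (hx : 0 < x) :
    HasDerivAt Real.Gamma (deriv Real.Gamma x) x :=
  (Real.differentiableAt_Gamma (gamma_ne_neg_nat hx)).hasDerivAt

lemma deriv_gamma_rec {x : ℝ} (hx : 0 < x) :
    deriv Real.Gamma (x + 1) = Real.Gamma x + x * deriv Real.Gamma x := by
  have h2 : HasDerivAt (fun y : ℝ => Real.Gamma (y + 1)) (deriv Real.Gamma (x + 1)) x := by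
    have := (hasDerivAt_realGamma (by linarith : (0:ℝ) < x + 1)).comp x
      ((hasDerivAt_id x).add_const 1)
    simpa [Function.comp_def] using this
  have h3 : (fun y : ℝ => Real.Gamma (y + 1)) =ᶠ[nhds x] fun y => y * Real.Gamma y := by
    filter_upwards [Ioi_mem_nhds hx] with y hy
    exact Real.Gamma_add_one (ne_of_gt hy)
  have h4 : HasDerivAt (fun y : ℝ => y * Real.Gamma y)
      (1 * Real.Gamma x + x * deriv Real.Gamma x) x :=
    (hasDerivAt_id x).mul (hasDerivAt_realGamma hx)
  have h5 := h4.congr_of_eventuallyEq h3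
  have := h2.unique h5
  rw [this]; ring

lemma digamma_rec {x : ℝ} (hx : 0 < x) : digamma (x + 1) = digamma x + 1 / x := by
  have hg : 0 < Real.Gamma x := Real.Gamma_pos_of_pos hx
  have h1 : Real.Gamma (x + 1) = x * Real.Gamma x := Real.Gamma_add_one (ne_of_gt hx)
  rw [digamma, digamma, deriv_gamma_rec hx, h1]
  field_simp
  ring

lemma hasDerivAt_logGamma {x : ℝ} (hx : 0 < x) :
    HasDerivAt (fun y => Real.log (Real.Gamma y)) (digamma x) x := by
  have hg : Real.Gamma x ≠ 0 := (Real.Gamma_pos_of_pos hx).ne'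
  exact (hasDerivAt_realGamma hx).log hg

lemma digamma_le_log {x : ℝ} (hx : 0 < x) :
    digamma x ≤ Real.log x ∧ Real.log x ≤ digamma x + 1 / x := by
  have hconv := Real.convexOn_log_Gamma
  have hx1 : x + 1 ∈ Ioi (0:ℝ) := by simp; linarith
  have hxm : x ∈ Ioi (0:ℝ) := hx
  have hlt : x < x + 1 := by linarith
  have hslope : slope (Real.log ∘ Real.Gamma) x (x + 1) = Real.log x := by
    rw [slope_def_field]
    simp only [Function.comp_apply]
    rw [Real.Gamma_add_one (ne_of_gt hx), Real.log_mul (ne_of_gt hx)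
      (Real.Gamma_pos_of_pos hx).ne']
    field_simp
    ring
  have hd1 : deriv (Real.log ∘ Real.Gamma) x = digamma x := by
    have := hasDerivAt_logGamma hx
    exact HasDerivAt.deriv (by exact this)
  have hd2 : deriv (Real.log ∘ Real.Gamma) (x + 1) = digamma (x + 1) := by
    have := hasDerivAt_logGamma (show (0:ℝ) < x + 1 by linarith)
    exact HasDerivAt.deriv (by exact this)
  constructor
  · have := hconv.deriv_le_slope hxm hx1 hlt
      (by rw [← hd1] at *; exact (hasDerivAt_logGamma hx).differentiableAt)
    rw [hd1, hslope] at this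
    exact this
  · have := hconv.slope_le_deriv hxm hx1 hlt
      (hasDerivAt_logGamma (show (0:ℝ) < x + 1 by linarith)).differentiableAt
    rw [hd2, hslope, digamma_rec hx] at this
    exact this
lemma Gn0_le {x : ℝ} (hx : 0 < x) : Gn 0 x ≤ 1 / x := by
  rw [← int_exp hx]
  apply setIntegral_mono_on (integrableOn_K_phi hx) _ measurableSet_Ioi
  · intro t ht
    have ht' : 0 < t := ht
    have h1 := phi_le_one ht'
    have h2 := exp_pos (-(x * t))
    calc t ^ 0 * rexp (-(x * t)) * phi t = rexp (-(x * t)) * phi t := by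
          rw [pow_zero, one_mul]
      _ ≤ rexp (-(x * t)) * 1 := mul_le_mul_of_nonneg_left h1 (le_of_lt h2)
      _ = rexp (-(x * t)) := mul_one _
  · simpa [neg_mul] using exp_neg_integrableOn_Ioi (0:ℝ) hx

lemma integrableOn_exp_mul {x : ℝ} (hx : 0 < x) :
    IntegrableOn (fun t : ℝ => rexp (-(x * t))) (Ioi 0) := by
  simpa [neg_mul] using exp_neg_integrableOn_Ioi (0:ℝ) hx

lemma Gn0_rec {x : ℝ} (hx : 0 < x) :
    Gn 0 x - Gn 0 (x + 1) = 1 / x - (Real.log (x + 1) - Real.log x) := by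
  have hx1 : (0:ℝ) < x + 1 := by linarith
  have h1 : Gn 0 x - Gn 0 (x + 1)
      = ∫ t in Ioi (0:ℝ), (t ^ 0 * rexp (-(x * t)) * phi t
          - t ^ 0 * rexp (-((x + 1) * t)) * phi t) := by
    rw [integral_sub (integrableOn_K_phi hx) (integrableOn_K_phi hx1)]
    rfl
  have h2 : ∀ t ∈ Ioi (0:ℝ), (t ^ 0 * rexp (-(x * t)) * phi t
      - t ^ 0 * rexp (-((x + 1) * t)) * phi t)
      = rexp (-(x * t)) - (rexp (-(x * t)) - rexp (-((x+1) * t))) / t := by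
    intro t ht
    have ht' : 0 < t := ht
    have hv : rexp (-((x + 1) * t)) = rexp (-(x * t)) * rexp (-t) := by
      rw [← Real.exp_add]; ring_nf
    have h1v := one_sub_exp_pos ht'
    rw [pow_zero, one_mul, one_mul, phi, hv]
    field_simp
  rw [h1, setIntegral_congr_fun measurableSet_Ioi h2,
    integral_sub (integrableOn_exp_mul hx) (integrableOn_frullani hx hx1),
    int_exp hx]
  have : (∫ t in Ioi (0:ℝ), (rexp (-(x * t)) - rexp (-((x+1) * t))) / t) = xi x (x + 1) := rfl
  rw [this, xi_eq_log hx]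

/-- The key integral representation:  `log x - ψ x = ∫₀^∞ e^{-xt} φ t dt`. -/
lemma log_sub_digamma_eq {x : ℝ} (hx : 0 < x) : Real.log x - digamma x = Gn 0 x := by
  set D : ℝ → ℝ := fun y => Real.log y - digamma y - Gn 0 y with hD
  have hstep : ∀ y : ℝ, 0 < y → D (y + 1) = D y := by
    intro y hy
    have h1 := Gn0_rec hy
    have h2 := digamma_rec hy
    simp only [hD]
    rw [h2]
    have hlog : Real.log (y+1) - Real.log y - (Real.log (y+1) - Real.log y) = 0 := by ring
    linarith
  have hn : ∀ n : ℕ, D (x + n) = D x := by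
    intro n
    induction n with
    | zero => simp
    | succ m ih =>
      have hxm : 0 < x + m := by positivity
      have : x + (m + 1 : ℕ) = (x + m) + 1 := by push_cast; ring
      rw [this, hstep _ hxm, ih]
  have hbound : ∀ y : ℝ, 0 < y → |D y| ≤ 2 / y := by
    intro y hy
    obtain ⟨hb1, hb2⟩ := digamma_le_log hy
    have hb3 : 0 ≤ Gn 0 y := Gn_nonneg
    have hb4 := Gn0_le hy
    rw [abs_le]
    constructor
    · simp only [hD]
      have : 2 / y = 1/y + 1/y := by ring
      rw [this]
      linarith
    · simp only [hD]
      have h5 : 0 < 1 / y := by positivity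
      have : 2 / y = 1/y + 1/y := by ring
      rw [this]
      linarith
  have hzero : D x = 0 := by
    by_contra hne
    have hpos : 0 < |D x| := abs_pos.mpr hne
    obtain ⟨n, hn2⟩ := exists_nat_ge (4 / |D x|)
    have hxn : 0 < x + n := by positivity
    have h6 : |D x| = |D (x + n)| := by rw [hn n]
    have h7 := hbound (x + n) hxn
    rw [← h6] at h7
    -- |D x| ≤ 2/(x+n) and n ≥ 4/|D x| gives contradiction
    have h8 : (4 / |D x|) ≤ (n:ℝ) := hn2
    have h9 : 4 ≤ |D x| * n := by
      rw [div_le_iff₀ hpos] at h8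
      linarith [mul_comm (|D x|) (n:ℝ)]
    have h10 : |D x| * (x + n) ≤ 2 := by
      rw [le_div_iff₀ hxn] at h7
      exact h7
    have h11 : 0 ≤ |D x| * x := by positivity
    nlinarith
  simp only [hD] at hzero
  linarith
/-- Candidate iterated derivatives of `x * G x`. -/
noncomputable def R (n : ℕ) (x : ℝ) : ℝ :=
  (-1) ^ n * (x * Gn n x) - (-1) ^ n * n * Gn (n - 1) x

lemma hasDerivAt_R (n : ℕ) {x : ℝ} (hx : 0 < x) : HasDerivAt (R n) (R (n + 1) x) x := by
  have h1 : HasDerivAt (fun y : ℝ => y * Gn n y) (1 * Gn n x + x * -Gn (n + 1) x) x :=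
    (hasDerivAt_id x).mul (hasDerivAt_Gn n hx)
  have h2 : HasDerivAt (fun y : ℝ => Gn (n - 1) y) (-Gn ((n - 1) + 1) x) x :=
    hasDerivAt_Gn (n - 1) hx
  have h3 := (h1.const_mul ((-1:ℝ) ^ n)).sub ((h2.const_mul ((-1:ℝ) ^ n * n)))
  have h4 : (n : ℝ) * Gn ((n - 1) + 1) x = n * Gn n x := by
    cases n with
    | zero => simp
    | succ m => simp
  refine h3.congr_deriv (Eq.symm ?_)
  have h5 : ((n + 1 : ℕ) : ℝ) = (n : ℝ) + 1 := by push_cast; ring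
  simp only [R, Nat.add_sub_cancel]
  rw [pow_succ]
  push_cast
  linear_combination (-(-1:ℝ) ^ n) * h4

lemma R_zero (x : ℝ) : R 0 x = x * Gn 0 x := by simp [R]

lemma sign_R (n : ℕ) {x : ℝ} (hx : 0 < x) : 0 ≤ (-1) ^ n * R n x := by
  have hsq : ((-1:ℝ) ^ n) * ((-1:ℝ) ^ n) = 1 := by
    rw [← pow_add]
    exact Even.neg_one_pow ⟨n, rfl⟩
  have hR : (-1) ^ n * R n x = x * Gn n x - n * Gn (n - 1) x := by
    simp only [R]
    linear_combination (x * Gn n x - (n:ℝ) * Gn (n - 1) x) * hsq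
  rw [hR]
  rcases Nat.eq_zero_or_pos n with hn | hn
  · subst hn
    simp only [Nat.cast_zero, zero_mul, sub_zero]
    exact mul_nonneg (le_of_lt hx) Gn_nonneg
  -- main case: n ≥ 1
  · set c := phi ((n : ℝ) / x) with hc
    have hnx : 0 < (n : ℝ) / x := by
      have : (0:ℝ) < n := by exact_mod_cast hn
      positivity
    -- step 1: difference as a single integral
    have h1 : x * Gn n x - n * Gn (n - 1) x
        = ∫ t in Ioi (0:ℝ), (x * t ^ n - n * t ^ (n - 1)) * rexp (-(x * t)) * phi t := by
      rw [Gn, Gn, ← integral_const_mul, ← integral_const_mul,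
        ← integral_sub ((integrableOn_K_phi hx).const_mul x)
          ((integrableOn_K_phi hx).const_mul (n:ℝ))]
      apply setIntegral_congr_fun measurableSet_Ioi
      intro t ht
      ring
    -- step 2: the weight has zero integral
    have h2 : ∫ t in Ioi (0:ℝ), (x * t ^ n - n * t ^ (n - 1)) * rexp (-(x * t)) = 0 := by
      have e1 : ∀ t ∈ Ioi (0:ℝ), (x * t ^ n - n * t ^ (n - 1)) * rexp (-(x * t))
          = x * (t ^ n * rexp (-(x * t))) - n * (t ^ (n - 1) * rexp (-(x * t))) := by
        intro t ht; ring
      rw [setIntegral_congr_fun measurableSet_Ioi e1,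
        integral_sub ((integrableOn_K hx).const_mul x) ((integrableOn_K hx).const_mul (n:ℝ)),
        integral_const_mul, integral_const_mul, zero_sum hn hx]
      ring
    -- step 3: split the integral using c
    set W : ℝ → ℝ := fun t => (x * t ^ n - n * t ^ (n - 1)) * rexp (-(x * t)) with hW
    have hWint : IntegrableOn W (Ioi 0) := by
      have he : W = fun t => x * (t ^ n * rexp (-(x * t)))
          - (n:ℝ) * (t ^ (n-1) * rexp (-(x * t))) := by
        funext t; simp only [hW]; ring
      rw [he]
      exact ((integrableOn_K hx).const_mul x).sub ((integrableOn_K hx).const_mul (n:ℝ))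
    have hWphiint : IntegrableOn (fun t => W t * phi t) (Ioi 0) := by
      have he : (fun t => W t * phi t) = fun t => x * (t ^ n * rexp (-(x * t)) * phi t)
          - (n:ℝ) * (t ^ (n-1) * rexp (-(x * t)) * phi t) := by
        funext t; simp only [hW]; ring
      rw [he]
      exact ((integrableOn_K_phi hx).const_mul x).sub ((integrableOn_K_phi hx).const_mul (n:ℝ))
    have hW1 : IntegrableOn (fun t => W t * (phi t - c)) (Ioi 0) := by
      have he : (fun t => W t * (phi t - c)) = fun t => (W t * phi t) - c * W t := by
        funext t; ring
      rw [he]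
      exact hWphiint.sub (hWint.const_mul c)
    have h3 : ∫ t in Ioi (0:ℝ), W t * phi t
        = (∫ t in Ioi (0:ℝ), W t * (phi t - c)) + c * ∫ t in Ioi (0:ℝ), W t := by
      have he : (fun t => W t * phi t) = fun t => (W t * (phi t - c)) + c * W t := by
        funext t; ring
      rw [he, integral_add hW1 (hWint.const_mul c), integral_const_mul]
    have h2' : ∫ t in Ioi (0:ℝ), W t = 0 := h2
    have h1' : x * Gn n x - n * Gn (n - 1) x = ∫ t in Ioi (0:ℝ), W t * phi t := h1
    rw [h1', h3, h2', mul_zero, add_zero]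
    -- step 4: pointwise nonnegativity
    apply setIntegral_nonneg measurableSet_Ioi
    intro t ht
    have ht' : 0 < t := ht
    simp only [hW]
    have key : 0 ≤ (x * t - n) * (phi t - c) := by
      rcases le_total t ((n:ℝ) / x) with h | h
      · have ha : x * t - n ≤ 0 := by
          have := (le_div_iff₀ hx).mp h
          nlinarith
        have hb : phi t - c ≤ 0 := sub_nonpos.mpr (phi_mono ht' h)
        nlinarith [mul_nonneg (neg_nonneg.mpr ha) (neg_nonneg.mpr hb)]
      · have ha : 0 ≤ x * t - n := by
          have := (div_le_iff₀ hx).mp h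
          nlinarith
        have hb : 0 ≤ phi t - c := sub_nonneg.mpr (phi_mono hnx h)
        exact mul_nonneg ha hb
    have hfac : (x * t ^ n - n * t ^ (n - 1)) = t ^ (n - 1) * (x * t - n) := by
      obtain ⟨m, rfl⟩ := Nat.exists_eq_add_of_le hn
      have : 1 + m - 1 = m := by omega
      rw [this, show 1 + m = m + 1 by ring, pow_succ]
      ring
    rw [hfac]
    have h9 : (0:ℝ) ≤ t ^ (n-1) := by positivity
    have h10 := exp_pos (-(x * t))
    calc (0:ℝ) ≤ (t ^ (n-1) * rexp (-(x*t))) * ((x * t - n) * (phi t - c)) := by positivity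
      _ = t ^ (n - 1) * (x * t - ↑n) * rexp (-(x * t)) * (phi t - c) := by ring
lemma iteratedDeriv_eqOn (D : ℕ → ℝ → ℝ) (f : ℝ → ℝ)
    (h0 : ∀ x ∈ Ioi (0:ℝ), f x = D 0 x)
    (hD : ∀ n, ∀ x ∈ Ioi (0:ℝ), HasDerivAt (D n) (D (n+1) x) x) :
    ∀ n, ∀ x ∈ Ioi (0:ℝ), iteratedDeriv n f x = D n x := by
  intro n
  induction n with
  | zero => intro x hx; rw [iteratedDeriv_zero]; exact h0 x hx
  | succ m ih =>
    intro x hx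
    rw [iteratedDeriv_succ]
    have hev : iteratedDeriv m f =ᶠ[nhds x] D m := by
      filter_upwards [isOpen_Ioi.mem_nhds hx] with y hy
      exact ih y hy
    rw [hev.deriv_eq]
    exact (hD m x hx).deriv

lemma leibniz_sum (A B : ℕ → ℝ) (n : ℕ) :
    ∑ k ∈ Finset.range (n+1), (n.choose k : ℝ) * (A (k+1) * B (n-k) + A k * B (n-k+1)) =
    ∑ k ∈ Finset.range (n+2), ((n+1).choose k : ℝ) * (A k * B (n+1-k)) := by
  have hL : ∑ k ∈ Finset.range (n+1), (n.choose k : ℝ) * (A (k+1) * B (n-k) + A k * B (n-k+1))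
      = (∑ k ∈ Finset.range (n+1), (n.choose k : ℝ) * (A (k+1) * B (n-k)))
        + ∑ k ∈ Finset.range (n+1), (n.choose k : ℝ) * (A k * B (n-k+1)) := by
    rw [← Finset.sum_add_distrib]
    apply Finset.sum_congr rfl
    intro k hk; ring
  have hS2 : ∑ k ∈ Finset.range (n+1), (n.choose k : ℝ) * (A k * B (n-k+1))
      = (∑ k ∈ Finset.range n, (n.choose (k+1) : ℝ) * (A (k+1) * B (n-k)))
        + A 0 * B (n+1) := by
    rw [Finset.sum_range_succ']
    congr 1
    · apply Finset.sum_congr rfl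
      intro k hk
      have hk' : k < n := Finset.mem_range.mp hk
      have : n - (k+1) + 1 = n - k := by omega
      rw [this]
    · simp
  have hR : ∑ k ∈ Finset.range (n+2), ((n+1).choose k : ℝ) * (A k * B (n+1-k))
      = (∑ k ∈ Finset.range (n+1), (((n.choose k) : ℝ) + (n.choose (k+1) : ℝ))
          * (A (k+1) * B (n-k))) + A 0 * B (n+1) := by
    rw [Finset.sum_range_succ']
    congr 1
    · apply Finset.sum_congr rfl
      intro k hk
      have h1 : (n+1).choose (k+1) = n.choose k + n.choose (k+1) := Nat.choose_succ_succ n k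
      have h2 : n + 1 - (k+1) = n - k := by omega
      rw [h1, h2]
      push_cast
      ring
    · simp
  have hsplit : ∑ k ∈ Finset.range (n+1), (((n.choose k) : ℝ) + (n.choose (k+1) : ℝ))
      * (A (k+1) * B (n-k))
      = (∑ k ∈ Finset.range (n+1), (n.choose k : ℝ) * (A (k+1) * B (n-k)))
        + ∑ k ∈ Finset.range n, (n.choose (k+1) : ℝ) * (A (k+1) * B (n-k)) := by
    calc ∑ k ∈ Finset.range (n+1), (((n.choose k) : ℝ) + (n.choose (k+1) : ℝ))
          * (A (k+1) * B (n-k))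
        = ∑ k ∈ Finset.range (n+1), ((n.choose k : ℝ) * (A (k+1) * B (n-k))
            + (n.choose (k+1) : ℝ) * (A (k+1) * B (n-k))) := by
          apply Finset.sum_congr rfl; intro k hk; ring
      _ = (∑ k ∈ Finset.range (n+1), (n.choose k : ℝ) * (A (k+1) * B (n-k)))
            + ∑ k ∈ Finset.range (n+1), (n.choose (k+1) : ℝ) * (A (k+1) * B (n-k)) :=
          Finset.sum_add_distrib
      _ = (∑ k ∈ Finset.range (n+1), (n.choose k : ℝ) * (A (k+1) * B (n-k)))
            + ∑ k ∈ Finset.range n, (n.choose (k+1) : ℝ) * (A (k+1) * B (n-k)) := by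
          rw [Finset.sum_range_succ (fun k => (n.choose (k+1) : ℝ) * (A (k+1) * B (n-k))),
            Nat.choose_succ_self]
          simp
  rw [hL, hS2, hR, hsplit]
  ring
noncomputable def Afun (α : ℝ) (k : ℕ) (x : ℝ) : ℝ :=
  (∏ i ∈ Finset.range k, (α - 1 - i)) * x ^ (α - 1 - k)

lemma hasDerivAt_Afun {α : ℝ} (k : ℕ) {x : ℝ} (hx : 0 < x) :
    HasDerivAt (Afun α k) (Afun α (k+1) x) x := by
  have h : HasDerivAt (fun y : ℝ => y ^ (α - 1 - k))
      ((α - 1 - k) * x ^ (α - 1 - k - 1)) x :=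
    Real.hasDerivAt_rpow_const (Or.inl hx.ne')
  have h2 := h.const_mul (∏ i ∈ Finset.range k, (α - 1 - (i:ℝ)))
  refine h2.congr_deriv (Eq.symm ?_)
  rw [Afun, Finset.prod_range_succ]
  have hexp : α - 1 - ((k+1:ℕ):ℝ) = α - 1 - (k:ℝ) - 1 := by push_cast; ring
  rw [hexp]
  ring

lemma sign_Afun {α : ℝ} (hα : α ≤ 1) (k : ℕ) {x : ℝ} (hx : 0 < x) :
    0 ≤ (-1) ^ k * Afun α k x := by
  have h1 : 0 ≤ (-1:ℝ) ^ k * ∏ i ∈ Finset.range k, (α - 1 - i) := by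
    induction k with
    | zero => simp
    | succ m ih =>
      rw [Finset.prod_range_succ, pow_succ]
      have h2 : 0 ≤ 1 - α + m := by
        have : (0:ℝ) ≤ m := Nat.cast_nonneg m
        linarith
      calc (0:ℝ) ≤ ((-1:ℝ) ^ m * ∏ i ∈ Finset.range m, (α - 1 - i)) * (1 - α + m) :=
            mul_nonneg ih h2
        _ = (-1:ℝ) ^ m * -1 * ((∏ i ∈ Finset.range m, (α - 1 - i)) * (α - 1 - m)) := by ring
  have h2 : 0 < x ^ (α - 1 - (k:ℝ)) := Real.rpow_pos_of_pos hx _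
  calc (0:ℝ) ≤ ((-1:ℝ) ^ k * ∏ i ∈ Finset.range k, (α - 1 - i)) * x ^ (α - 1 - (k:ℝ)) :=
        mul_nonneg h1 (le_of_lt h2)
    _ = (-1) ^ k * Afun α k x := by rw [Afun]; ring

noncomputable def Dfull (α : ℝ) (n : ℕ) (x : ℝ) : ℝ :=
  ∑ k ∈ Finset.range (n+1), (n.choose k : ℝ) * (Afun α k x * R (n-k) x)

lemma hasDerivAt_Dfull {α : ℝ} (n : ℕ) {x : ℝ} (hx : 0 < x) :
    HasDerivAt (Dfull α n) (Dfull α (n+1) x) x := by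
  have hterm : ∀ k ∈ Finset.range (n+1),
      HasDerivAt (fun y => (n.choose k : ℝ) * (Afun α k y * R (n-k) y))
        ((n.choose k : ℝ) * (Afun α (k+1) x * R (n-k) x + Afun α k x * R (n-k+1) x)) x := by
    intro k hk
    exact ((hasDerivAt_Afun k hx).mul (hasDerivAt_R (n-k) hx)).const_mul _
  have h := HasDerivAt.fun_sum hterm
  have heq : Dfull α n = fun y => ∑ k ∈ Finset.range (n+1),
      (n.choose k : ℝ) * (Afun α k y * R (n-k) y) := rfl
  rw [heq]
  refine h.congr_deriv (Eq.symm ?_)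
  rw [Dfull]
  have := leibniz_sum (fun k => Afun α k x) (fun j => R j x) n
  rw [← this]

lemma sign_Dfull {α : ℝ} (hα : α ≤ 1) (n : ℕ) {x : ℝ} (hx : 0 < x) :
    0 ≤ (-1) ^ n * Dfull α n x := by
  rw [Dfull, Finset.mul_sum]
  apply Finset.sum_nonneg
  intro k hk
  have hk' : k ≤ n := Nat.lt_succ_iff.mp (Finset.mem_range.mp hk)
  have hpow : (-1:ℝ) ^ n = (-1:ℝ) ^ k * (-1:ℝ) ^ (n-k) := by
    rw [← pow_add]
    congr 1
    omega
  have h1 := sign_Afun hα k hx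
  have h2 := sign_R (n-k) hx
  have hc : (0:ℝ) ≤ (n.choose k : ℝ) := Nat.cast_nonneg _
  calc (0:ℝ) ≤ (n.choose k : ℝ) * (((-1:ℝ) ^ k * Afun α k x) * ((-1:ℝ) ^ (n-k) * R (n-k) x)) :=
        mul_nonneg hc (mul_nonneg h1 h2)
    _ = (-1) ^ n * ((n.choose k : ℝ) * (Afun α k x * R (n-k) x)) := by rw [hpow]; ring

lemma Dfull_zero {α : ℝ} {x : ℝ} (hx : 0 < x) :
    x ^ α * (Real.log x - digamma x) = Dfull α 0 x := by
  have h1 : Dfull α 0 x = x ^ (α - 1) * (x * Gn 0 x) := by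
    rw [Dfull]
    simp [Afun, R_zero]
  rw [h1, log_sub_digamma_eq hx]
  have h2 : x ^ (α - 1) * x = x ^ α := by
    rw [← Real.rpow_add_one hx.ne' (α - 1)]
    norm_num
  calc x ^ α * Gn 0 x = (x ^ (α-1) * x) * Gn 0 x := by rw [h2]
    _ = x ^ (α - 1) * (x * Gn 0 x) := by ring

theorem theta_cm (α : ℝ) (hα : α ≤ 1) :
    CompletelyMonotonicOn (fun x => x ^ α * (Real.log x - digamma x)) (Ioi 0) := by
  constructor
  · intro x hx
    have hx' : 0 < x := hx
    apply ContDiffAt.contDiffWithinAt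
    have h1 : ContDiffAt ℝ (⊤ : ℕ∞) (fun y : ℝ => y ^ α) x := Real.contDiffAt_rpow_const_of_ne hx'.ne'
    have h2 : ContDiffAt ℝ (⊤ : ℕ∞) Real.log x := Real.contDiffAt_log.mpr hx'.ne'
    have h3 := contDiffAt_digamma hx'
    exact h1.mul (h2.sub h3)
  · intro n x hx
    have hx' : 0 < x := hx
    have hiter := iteratedDeriv_eqOn (Dfull α) _ (fun y hy => Dfull_zero hy)
      (fun m y hy => hasDerivAt_Dfull m hy) n x hx
    rw [hiter]
    exact sign_Dfull hα n hx'
end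
end

section
/- If the function θ_α(x) = x^α (log x − ψ(x)) is completely monotonic on (0,∞), then α ≤ 1. -/
noncomputable section
open Real Set Filter Topology

theorem theta_cm_necessary (α : ℝ)
    (h : CompletelyMonotonicOn (fun x => x ^ α * (Real.log x - digamma x)) (Ioi 0)) :
    α ≤ 1 := by
  by_contra hα
  push_neg at hα
  set θ : ℝ → ℝ := fun x => x ^ α * (Real.log x - digamma x) with hθ
  set f : ℝ → ℝ := fun x => Real.log (Real.Gamma x) with hf
  have hc : ConvexOn ℝ (Ioi 0) f := by
    simpa [hf, Function.comp_def] using Real.convexOn_log_Gamma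
  have hderΓ : ∀ {x : ℝ}, 0 < x → DifferentiableAt ℝ Real.Gamma x := fun {x} hx =>
    Real.differentiableAt_Gamma (fun m => ((neg_nonpos.mpr (Nat.cast_nonneg m)).trans_lt hx).ne')
  have hder : ∀ {x : ℝ}, 0 < x → DifferentiableAt ℝ f x := fun {x} hx =>
    (hderΓ hx).log (Real.Gamma_pos_of_pos hx).ne'
  have hdig : ∀ {x : ℝ}, 0 < x → digamma x = deriv f x := by
    intro x hx
    rw [hf, deriv.log (hderΓ hx) (Real.Gamma_pos_of_pos hx).ne', digamma]
  -- recurrence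
  have h_rec : ∀ x : ℝ, 0 < x → f (x + 1) = f x + Real.log x := by
    intro x hx
    simp only [hf, Real.Gamma_add_one hx.ne',
      Real.log_mul hx.ne' (Real.Gamma_pos_of_pos hx).ne', add_comm]
  have hder_rec : ∀ x : ℝ, 0 < x → deriv f x = deriv f (x + 1) - 1 / x := by
    intro x hx
    have : deriv f (x + 1) = deriv f x + 1 / x := by
      rw [← deriv_comp_add_const, one_div, ← Real.deriv_log,
        ← deriv_add (hder hx) (Real.differentiableAt_log hx.ne')]
      apply Filter.EventuallyEq.deriv_eq
      filter_upwards [eventually_gt_nhds hx] using h_rec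
    linarith
  -- digamma 1 = -γ
  have hγ : digamma 1 = -Real.eulerMascheroniConstant := by
    have h0 := Real.deriv_Gamma_nat 0
    simp only [Nat.cast_zero, zero_add, Nat.factorial_zero, Nat.cast_one, harmonic_zero,
      Rat.cast_zero, add_zero, one_mul] at h0
    rw [digamma, h0, Real.Gamma_one, div_one]
  have hγpos : (0:ℝ) < Real.eulerMascheroniConstant :=
    lt_trans (by norm_num) Real.one_half_lt_eulerMascheroniConstant
  -- θ is antitone on Ioi 0
  have hθanti : AntitoneOn θ (Ioi 0) := by
    apply antitoneOn_of_deriv_nonpos (convex_Ioi 0) (h.1.continuousOn)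
    · rw [interior_Ioi]
      intro x hx
      exact ((h.1.contDiffAt ((isOpen_Ioi).mem_nhds hx)).differentiableAt (by simp)).differentiableWithinAt
    · rw [interior_Ioi]
      intro x hx
      have := h.2 1 x hx
      rw [iteratedDeriv_one] at this
      simpa using by linarith [this]
  -- bounds on deriv f on [1,2]
  have hmono : ∀ x : ℝ, 0 < x → x < 1 → deriv f 1 ≤ deriv f (x + 1) ∧ deriv f (x + 1) ≤ deriv f 2 := by
    intro x hx hx1
    constructor
    · exact (hc.deriv_le_slope (by norm_num) (by simp; linarith) (by linarith) (hder one_pos)).trans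
        (hc.slope_le_deriv (by norm_num) (by simp; linarith) (by linarith) (hder (by linarith)))
    · exact (hc.deriv_le_slope (by simp; linarith) (by norm_num) (by linarith) (hder (by linarith))).trans
        (hc.slope_le_deriv (by simp; linarith) (by norm_num) (by linarith) (hder (by norm_num)))
  -- θ tends to 0 at 0⁺
  have hrpow0 : ∀ p : ℝ, 0 < p → Tendsto (fun x : ℝ => x ^ p) (𝓝[>] 0) (𝓝 0) := by
    intro p hp
    have := (Real.continuousAt_rpow_const 0 p (Or.inr hp.le)).tendsto
    rw [Real.zero_rpow hp.ne'] at this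
    exact this.mono_left nhdsWithin_le_nhds
  have hlim : Tendsto θ (𝓝[>] 0) (𝓝 0) := by
    have h1 : Tendsto (fun x : ℝ => x ^ α * Real.log x) (𝓝[>] 0) (𝓝 0) := by
      have := tendsto_log_mul_rpow_nhdsGT_zero (by linarith : (0:ℝ) < α)
      simpa [mul_comm] using this
    have h2 : Tendsto (fun x : ℝ => x ^ (α - 1)) (𝓝[>] 0) (𝓝 0) := hrpow0 _ (by linarith)
    have h3 : Tendsto (fun x : ℝ => x ^ α * deriv f (x + 1)) (𝓝[>] 0) (𝓝 0) := by
      apply tendsto_of_tendsto_of_tendsto_of_le_of_le'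
        (g := fun x : ℝ => min (x ^ α * deriv f 1) (x ^ α * deriv f 2))
        (h := fun x : ℝ => max (x ^ α * deriv f 1) (x ^ α * deriv f 2))
      · have ha := (hrpow0 α (by linarith)).mul_const (deriv f 1)
        have hb := (hrpow0 α (by linarith)).mul_const (deriv f 2)
        rw [zero_mul] at ha hb
        simpa using ha.min hb
      · have ha := (hrpow0 α (by linarith)).mul_const (deriv f 1)
        have hb := (hrpow0 α (by linarith)).mul_const (deriv f 2)
        rw [zero_mul] at ha hb
        simpa using ha.max hb
      · filter_upwards [Ioo_mem_nhdsGT one_pos] with x hx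
        have hxp : (0:ℝ) < x ^ α := Real.rpow_pos_of_pos hx.1 α
        exact le_trans (min_le_left _ _) (by nlinarith [(hmono x hx.1 hx.2).1])
      · filter_upwards [Ioo_mem_nhdsGT one_pos] with x hx
        have hxp : (0:ℝ) < x ^ α := Real.rpow_pos_of_pos hx.1 α
        exact le_trans (by nlinarith [(hmono x hx.1 hx.2).2]) (le_max_right _ _)
    have heq : ∀ᶠ x in 𝓝[>] (0:ℝ), θ x =
        x ^ α * Real.log x - x ^ α * deriv f (x + 1) + x ^ (α - 1) := by
      filter_upwards [self_mem_nhdsWithin] with x hx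
      have hx : (0:ℝ) < x := hx
      rw [hθ]
      simp only
      rw [hdig hx, hder_rec x hx, Real.rpow_sub hx, Real.rpow_one]
      field_simp
      ring
    rw [Filter.tendsto_congr' heq]
    simpa using (h1.sub h3).add h2
  -- θ x ≥ γ for x ∈ (0,1], but θ → 0 : contradiction
  have hθ1 : θ 1 = Real.eulerMascheroniConstant := by
    simp [hθ, hγ]
  have hev : ∀ᶠ x in 𝓝[>] (0:ℝ), Real.eulerMascheroniConstant ≤ θ x := by
    filter_upwards [Ioo_mem_nhdsGT one_pos] with x hx
    have := hθanti hx.1 (mem_Ioi.mpr one_pos) hx.2.le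
    rwa [hθ1] at this
  have := ge_of_tendsto hlim hev
  linarith
end
end

section
/- For every fixed positive integer p, the function q_p(t) = t^{t·(ψ_p(t) − log(pt/(t+p+1))) − γ} is logarithmically completely monotonic on (0,1). -/
noncomputable section
open Real Set

lemma sqrt_pair (s t : ℝ) (hs : 0 ≤ s) (ht : 0 ≤ t) : 2 * Real.sqrt (s * t) ≤ s + t := by
  rw [Real.sqrt_mul hs]
  nlinarith [sq_nonneg (Real.sqrt s - Real.sqrt t), Real.sq_sqrt hs, Real.sq_sqrt ht,
    Real.sqrt_nonneg s, Real.sqrt_nonneg t]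

lemma midpoint_pow (q : ℕ) (hq : 1 ≤ q) (m : ℝ) (hm : 1/2 < m) :
    (q : ℝ) / m ^ (q+1) ≤ 1 / (m - 1/2) ^ q - 1 / (m + 1/2) ^ q := by
  set a : ℝ := m - 1/2 with ha_def
  set b : ℝ := m + 1/2 with hb_def
  have ha : 0 < a := by simp [ha_def]; linarith
  have hb : 0 < b := by simp [hb_def]; linarith
  have hm0 : (0:ℝ) < m := by linarith
  have hab : 0 < a * b := mul_pos ha hb
  have key1 : (q : ℝ) * Real.sqrt ((a*b) ^ (q-1)) ≤ ∑ i ∈ Finset.range q, b ^ i * a ^ (q-1-i) := by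
    have h2 : 2 * ∑ i ∈ Finset.range q, b ^ i * a ^ (q-1-i)
        = ∑ i ∈ Finset.range q, (b ^ i * a ^ (q-1-i) + b ^ (q-1-i) * a ^ i) := by
      rw [Finset.sum_add_distrib, two_mul]
      congr 1
      rw [← Finset.sum_range_reflect]
      apply Finset.sum_congr rfl
      intro i hi
      simp only [Finset.mem_range] at hi
      have h1 : q - 1 - (q - 1 - i) = i := by omega
      rw [h1]
    have hterm : ∀ i ∈ Finset.range q,
        2 * Real.sqrt ((a*b) ^ (q-1)) ≤ b ^ i * a ^ (q-1-i) + b ^ (q-1-i) * a ^ i := by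
      intro i hi
      simp only [Finset.mem_range] at hi
      have hst : (b ^ i * a ^ (q-1-i)) * (b ^ (q-1-i) * a ^ i) = (a*b) ^ (q-1) := by
        have e1 : b ^ i * a ^ (q-1-i) * (b ^ (q-1-i) * a ^ i)
            = (a ^ (q-1-i) * a ^ i) * (b ^ i * b ^ (q-1-i)) := by ring
        have e2 : q - 1 - i + i = q - 1 := by omega
        have e3 : i + (q - 1 - i) = q - 1 := by omega
        rw [e1, ← pow_add, ← pow_add, e2, e3, mul_pow]
      have := sqrt_pair (b ^ i * a ^ (q-1-i)) (b ^ (q-1-i) * a ^ i)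
        (by positivity) (by positivity)
      rw [hst] at this
      linarith
    have hsum := Finset.sum_le_sum hterm
    rw [Finset.sum_const, Finset.card_range, nsmul_eq_mul] at hsum
    linarith [hsum, h2]
  have key2 : Real.sqrt ((a*b) ^ (q+1)) ≤ m ^ (q+1) := by
    have hm2 : a * b ≤ m ^ 2 := by simp [ha_def, hb_def]; nlinarith
    have h3 : (a*b) ^ (q+1) ≤ (m^2) ^ (q+1) := pow_le_pow_left₀ hab.le hm2 _
    calc Real.sqrt ((a*b)^(q+1)) ≤ Real.sqrt ((m^2)^(q+1)) := Real.sqrt_le_sqrt h3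
      _ = m ^ (q+1) := by
          rw [← pow_mul, mul_comm 2 (q+1), pow_mul, Real.sqrt_sq (by positivity)]
  -- geometric sum
  have geo : (∑ i ∈ Finset.range q, b ^ i * a ^ (q-1-i)) * (b - a) = b ^ q - a ^ q :=
    geom_sum₂_mul b a q
  have hba : b - a = 1 := by simp [ha_def, hb_def]; ring
  rw [hba, mul_one] at geo
  have key3 : (q:ℝ) * (a*b) ^ q ≤ m ^ (q+1) * (b ^ q - a ^ q) := by
    have hprod : Real.sqrt ((a*b) ^ (q+1)) * ((q:ℝ) * Real.sqrt ((a*b) ^ (q-1)))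
        ≤ m ^ (q+1) * (b ^ q - a ^ q) := by
      rw [← geo]
      exact mul_le_mul key2 key1 (by positivity) (by positivity)
    have hsq : Real.sqrt ((a*b) ^ (q+1)) * Real.sqrt ((a*b) ^ (q-1)) = (a*b) ^ q := by
      rw [← Real.sqrt_mul (by positivity), ← pow_add]
      have : q + 1 + (q - 1) = q * 2 := by omega
      rw [this, pow_mul, Real.sqrt_sq (by positivity)]
    nlinarith [hprod, hsq]
  have hrw : 1 / a ^ q - 1 / b ^ q = (b ^ q - a ^ q) / (a ^ q * b ^ q) := by
    field_simp
  rw [hrw, div_le_div_iff₀ (by positivity) (by positivity), ← mul_pow]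
  nlinarith [key3]

lemma two_t_le (t : ℝ) (ht0 : 0 < t) (ht1 : t < 1) :
    2 * t ≤ Real.log (1 + t) - Real.log (1 - t) := by
  set g : ℝ → ℝ := fun y => Real.log (1 + y) - Real.log (1 - y) - 2 * y with hg
  have hderiv : ∀ y ∈ Set.Ioo (0:ℝ) t, 0 < deriv g y := by
    intro y hy
    obtain ⟨hy0, hyt⟩ := hy
    have hy1 : y < 1 := lt_trans hyt ht1
    have h1 : HasDerivAt g (1/(1+y) + 1/(1-y) - 2) y := by
      have d1 : HasDerivAt (fun y : ℝ => Real.log (1 + y)) (1/(1+y)) y := by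
        have := ((hasDerivAt_id y).const_add 1).log (by intro h; simp only [id_eq] at h; linarith)
        simpa using this
      have d2 : HasDerivAt (fun y : ℝ => Real.log (1 - y)) (-(1/(1-y))) y := by
        have := ((hasDerivAt_id y).const_sub 1).log (by intro h; simp only [id_eq] at h; linarith)
        convert! this using 1
        simp only [id_eq]
        field_simp
      have d3 : HasDerivAt (fun y : ℝ => 2 * y) 2 y := by
        simpa using (hasDerivAt_id y).const_mul 2
      have := (d1.fun_sub d2).fun_sub d3
      convert! this using 1
      ring
    rw [h1.deriv]
    have h1y : (1:ℝ) + y ≠ 0 := by linarith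
    have h1y' : (1:ℝ) - y ≠ 0 := by linarith
    have h1y2 : (1:ℝ) - y^2 ≠ 0 := by nlinarith
    have : 1/(1+y) + 1/(1-y) = 2/(1-y^2) := by
      field_simp
      ring
    rw [this]
    have h2 : 1 - y^2 < 1 := by nlinarith
    have h3 : 0 < 1 - y^2 := by nlinarith
    rw [sub_pos, lt_div_iff₀ h3]
    nlinarith
  have hcont : ContinuousOn g (Set.Icc 0 t) := by
    apply ContinuousOn.sub
    apply ContinuousOn.sub
    · apply ContinuousOn.log (by fun_prop)
      intro y hy
      obtain ⟨h0, h1⟩ := hy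
      intro h; nlinarith [h]
    · apply ContinuousOn.log (by fun_prop)
      intro y hy
      obtain ⟨h0, h1⟩ := hy
      have : y < 1 := lt_of_le_of_lt h1 ht1
      intro h; nlinarith [h]
    · fun_prop
  have hdiff : ∀ y ∈ Set.Ioo (0:ℝ) t, DifferentiableAt ℝ g y := by
    intro y hy
    obtain ⟨hy0, hyt⟩ := hy
    have hy1 : y < 1 := lt_trans hyt ht1
    apply DifferentiableAt.sub
    apply DifferentiableAt.sub
    · exact (Real.differentiableAt_log (by linarith)).comp y (by fun_prop)
    · exact (Real.differentiableAt_log (by linarith : 1 - y ≠ 0)).comp y (by fun_prop)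
    · fun_prop
  have hmono := StrictMonoOn.monotoneOn <| strictMonoOn_of_deriv_pos (convex_Icc 0 t) hcont
    (by intro y hy; rw [interior_Icc] at hy; exact hderiv y hy)
  have h0t := hmono (Set.left_mem_Icc.mpr ht0.le) (Set.right_mem_Icc.mpr ht0.le) ht0.le
  have hg0 : g 0 = 0 := by simp [hg]
  rw [hg0] at h0t
  simp only [hg] at h0t
  linarith

lemma midpoint_log (m : ℝ) (hm : 1/2 < m) :
    1 / m ≤ Real.log (m + 1/2) - Real.log (m - 1/2) := by
  have hm0 : (0:ℝ) < m := by linarith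
  set t : ℝ := 1 / (2*m) with ht_def
  have ht0 : 0 < t := by positivity
  have ht1 : t < 1 := by
    rw [ht_def, div_lt_one (by linarith)]
    linarith
  have e1 : m + 1/2 = m * (1 + t) := by
    rw [ht_def]; field_simp
  have e2 : m - 1/2 = m * (1 - t) := by
    rw [ht_def]; field_simp
  rw [e1, e2, Real.log_mul hm0.ne' (by linarith), Real.log_mul hm0.ne' (by nlinarith [ht1] : (1:ℝ) - t ≠ 0)]
  have h2t : 1 / m = 2 * t := by rw [ht_def]; field_simp
  rw [h2t]
  have := two_t_le t ht0 ht1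
  linarith

lemma log_diff_le (y : ℝ) (hy : 0 < y) : Real.log (y + 1) - Real.log y ≤ 1 / y := by
  rw [← Real.log_div (by linarith) hy.ne']
  have h1 : (y+1)/y - 1 = 1/y := by field_simp; ring
  have := Real.log_le_sub_one_of_pos (show (0:ℝ) < (y+1)/y by positivity)
  linarith

lemma chainN (N : ℕ) (hN : 1 ≤ N) (x : ℝ) (hx : 0 < x) (P : ℕ) :
    (N : ℝ) * (N + 1) * ∑ k ∈ Finset.range (P + 1), (k : ℝ) / (x + k) ^ (N + 2)
      ≤ 1 / x ^ N - 1 / (x + P) ^ N - N * P / (x + P + 1/2) ^ (N + 1) := by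
  induction P with
  | zero => simp
  | succ P ih =>
    rw [Finset.sum_range_succ]
    have hm1 : (1:ℝ)/2 < x + P + 1 := by
      have : (0:ℝ) ≤ (P:ℕ) := Nat.cast_nonneg P
      push_cast
      linarith [Nat.cast_nonneg (α := ℝ) P]
    have hL1 := midpoint_pow (N+1) (by omega) (x + P + 1) hm1
    have hL2 := midpoint_pow N hN (x + P + 1/2) (by linarith [Nat.cast_nonneg (α := ℝ) P])
    -- rewrite the midpoint expressions
    have e1 : (x + P + 1) - 1/2 = x + P + 1/2 := by ring
    have e2 : (x + P + 1) + 1/2 = x + P + 3/2 := by ring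
    have e3 : (x + P + 1/2) - 1/2 = x + P := by ring
    have e4 : (x + P + 1/2) + 1/2 = x + P + 1 := by ring
    rw [e1, e2] at hL1
    rw [e3, e4] at hL2
    -- cast arithmetic
    have cast1 : ((P + 1 : ℕ) : ℝ) = (P : ℝ) + 1 := by push_cast; ring
    have cast2 : (((N:ℕ) + 1 : ℕ) : ℝ) = (N : ℝ) + 1 := by push_cast; ring
    have hxP1 : x + ((P+1 : ℕ) : ℝ) = x + P + 1 := by push_cast; ring
    rw [hxP1, cast1]
    have e5 : x + (P:ℝ) + 1 + 1/2 = x + P + 3/2 := by ring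
    rw [e5]
    have hP0 : (0:ℝ) ≤ (P:ℝ) := Nat.cast_nonneg P
    have hN0 : (0:ℝ) < (N:ℝ) := by exact_mod_cast Nat.pos_of_ne_zero (by omega)
    -- multiply hL1 by N*(P+1) ≥ 0
    have hL1' : (N:ℝ) * ((P:ℝ)+1) * (((N:ℝ)+1) / (x + P + 1) ^ (N + 2))
        ≤ (N:ℝ) * ((P:ℝ)+1) * (1 / (x + P + 1/2) ^ (N+1) - 1 / (x + P + 3/2) ^ (N+1)) := by
      apply mul_le_mul_of_nonneg_left _ (by positivity)
      convert! hL1 using 2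
      push_cast; ring
    -- multiply hL2 by 1
    -- combine
    have expand : (N:ℝ) * (N + 1) * (∑ k ∈ Finset.range (P + 1), (k : ℝ) / (x + k) ^ (N + 2)
          + ((P:ℝ)+1) / (x + P + 1) ^ (N + 2))
        = (N:ℝ) * (N+1) * ∑ k ∈ Finset.range (P + 1), (k : ℝ) / (x + k) ^ (N + 2)
          + (N:ℝ) * ((P:ℝ)+1) * (((N:ℝ)+1) / (x + P + 1) ^ (N + 2)) := by ring
    rw [expand]
    have hL2' : (N:ℝ) / (x + P + 1/2) ^ (N+1) ≤ 1 / (x + P) ^ N - 1 / (x + P + 1) ^ N := hL2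
    have final : (N:ℝ) * ((P:ℝ)+1) * (1 / (x + P + 1/2) ^ (N+1) - 1 / (x + P + 3/2) ^ (N+1))
          + (1 / x ^ N - 1 / (x + P) ^ N - N * P / (x + P + 1/2) ^ (N + 1))
        ≤ 1 / x ^ N - 1 / (x + P + 1) ^ N - N * ((P:ℝ)+1) / (x + P + 3/2) ^ (N + 1) := by
      have expand2 : (N:ℝ) * ((P:ℝ)+1) * (1 / (x + P + 1/2) ^ (N+1) - 1 / (x + P + 3/2) ^ (N+1))
          = (N:ℝ) * (P:ℝ) / (x + P + 1/2) ^ (N+1) + (N:ℝ) * (1 / (x + P + 1/2) ^ (N+1))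
            - (N:ℝ) * ((P:ℝ)+1) / (x + P + 3/2) ^ (N+1) := by ring
      rw [expand2]
      have := hL2'
      rw [div_eq_mul_one_div] at this
      linarith
    linarith [ih, hL1', final]

lemma mainN (N : ℕ) (hN : 1 ≤ N) (x : ℝ) (hx : 0 < x) (p : ℕ) :
    (N : ℝ) * (N + 1) * ∑ k ∈ Finset.range (p + 1), (k : ℝ) / (x + k) ^ (N + 2)
      ≤ 1 / x ^ N - 1 / (x + p + 1) ^ N - N * (p + 1) / (x + p + 1) ^ (N + 1) := by
  have hchain := chainN N hN x hx p
  have hp0 : (0:ℝ) ≤ (p:ℝ) := Nat.cast_nonneg p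
  have hL2 := midpoint_pow N hN (x + p + 1/2) (by linarith)
  have e3 : (x + p + 1/2) - 1/2 = x + p := by ring
  have e4 : (x + p + 1/2) + 1/2 = x + p + 1 := by ring
  rw [e3, e4] at hL2
  have hmono : (N:ℝ) * ((p:ℝ)+1) / (x + p + 1) ^ (N+1) ≤ (N:ℝ) * ((p:ℝ)+1) / (x + p + 1/2) ^ (N+1) := by
    apply div_le_div_of_nonneg_left (by positivity) (by positivity)
    apply pow_le_pow_left₀ (by linarith) (by linarith)
  -- N*(p+1)/s = N*p/s + N/s, and N/s ≤ 1/(x+p)^N - 1/(x+p+1)^N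
  have hsplit : (N:ℝ) * ((p:ℝ)+1) / (x + p + 1/2) ^ (N+1)
      = (N:ℝ) * (p:ℝ) / (x + p + 1/2) ^ (N+1) + (N:ℝ) / (x + p + 1/2) ^ (N+1) := by ring
  linarith [hchain, hL2, hmono, hsplit.le]

lemma chain1 (x : ℝ) (hx : 0 < x) (P : ℕ) :
    ∑ k ∈ Finset.range (P + 1), (k : ℝ) / (x + k) ^ 2
      ≤ Real.log (x + P) - Real.log x - P / (x + P + 1/2) := by
  induction P with
  | zero => simp
  | succ P ih =>
    rw [Finset.sum_range_succ]
    have hP0 : (0:ℝ) ≤ (P:ℝ) := Nat.cast_nonneg P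
    have hL1 := midpoint_pow 1 le_rfl (x + P + 1) (by linarith)
    have hLlog := midpoint_log (x + P + 1/2) (by linarith)
    have e1 : (x + P + 1) - 1/2 = x + P + 1/2 := by ring
    have e2 : (x + P + 1) + 1/2 = x + P + 3/2 := by ring
    have e3 : (x + P + 1/2) - 1/2 = x + P := by ring
    have e4 : (x + P + 1/2) + 1/2 = x + P + 1 := by ring
    rw [e1, e2] at hL1
    rw [e3, e4] at hLlog
    simp only [pow_one] at hL1
    have hxP1 : x + ((P+1 : ℕ) : ℝ) = x + P + 1 := by push_cast; ring
    have cast1 : ((P + 1 : ℕ) : ℝ) = (P : ℝ) + 1 := by push_cast; ring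
    rw [hxP1, cast1]
    have e5 : x + (P:ℝ) + 1 + 1/2 = x + P + 3/2 := by ring
    rw [e5]
    -- hL1 : 1/(x+P+1)^2 ≤ 1/(x+P+1/2) - 1/(x+P+3/2)
    have hL1' : ((P:ℝ)+1) * ((1:ℝ) / (x + P + 1) ^ (1+1))
        ≤ ((P:ℝ)+1) * (1 / (x + P + 1/2) - 1 / (x + P + 3/2)) := by
      apply mul_le_mul_of_nonneg_left _ (by positivity)
      convert! hL1 using 2
      norm_num
    have expand : ((P:ℝ)+1) * (1 / (x + P + 1/2) - 1 / (x + P + 3/2))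
        = (P:ℝ) / (x + P + 1/2) + 1 / (x + P + 1/2) - ((P:ℝ)+1) / (x + P + 3/2) := by ring
    have h1 : ((P:ℝ)+1) / (x + P + 1) ^ 2 = ((P:ℝ)+1) * ((1:ℝ) / (x + P + 1) ^ (1+1)) := by
      norm_num
      ring
    have h2 : 1 / (x + P + 1/2) ≤ Real.log (x + P + 1) - Real.log (x + P) := hLlog
    rw [h1]
    linarith [ih, hL1', expand.le, h2]

lemma main1 (x : ℝ) (hx : 0 < x) (p : ℕ) :
    ∑ k ∈ Finset.range (p + 1), (k : ℝ) / (x + k) ^ 2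
      ≤ Real.log (x + p + 1) - Real.log x - (p + 1) / (x + p + 1) := by
  have hchain := chain1 x hx p
  have hp0 : (0:ℝ) ≤ (p:ℝ) := Nat.cast_nonneg p
  have hLlog := midpoint_log (x + p + 1/2) (by linarith)
  have e3 : (x + p + 1/2) - 1/2 = x + p := by ring
  have e4 : (x + p + 1/2) + 1/2 = x + p + 1 := by ring
  rw [e3, e4] at hLlog
  have hmono : ((p:ℝ)+1) / (x + p + 1) ≤ ((p:ℝ)+1) / (x + p + 1/2) := by
    apply div_le_div_of_nonneg_left (by positivity) (by positivity) (by linarith)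
  have hsplit : ((p:ℝ)+1) / (x + p + 1/2) = (p:ℝ) / (x + p + 1/2) + 1 / (x + p + 1/2) := by ring
  linarith [hchain, hLlog, hmono, hsplit.le]

lemma telescope_log (x : ℝ) (hx : 0 < x) (P : ℕ) :
    Real.log (x + P) - Real.log x ≤ ∑ k ∈ Finset.range P, 1 / (x + k) := by
  induction P with
  | zero => simp
  | succ P ih =>
    rw [Finset.sum_range_succ]
    have hP0 : (0:ℝ) ≤ (P:ℝ) := Nat.cast_nonneg P
    have := log_diff_le (x + P) (by linarith)
    have hxP1 : x + ((P+1 : ℕ) : ℝ) = (x + P) + 1 := by push_cast; ring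
    rw [hxP1]
    linarith


lemma hasDerivAt_cdiv_pow (cst b : ℝ) (n : ℕ) (x : ℝ) (h : x + b ≠ 0) :
    HasDerivAt (fun y => cst / (y + b) ^ n) (-(cst * n) / (x + b) ^ (n+1)) x := by
  have h1 : HasDerivAt (fun y : ℝ => (y + b) ^ n) ((n:ℝ) * (x+b)^(n-1)) x := by
    simpa using ((hasDerivAt_id x).add_const b).fun_pow n
  have h2 := h1.fun_inv (pow_ne_zero n h)
  have hfun : (fun y => cst / (y + b) ^ n) = (fun y => cst * ((y + b) ^ n)⁻¹) := by
    funext y; rw [div_eq_mul_inv]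
  rw [hfun]
  have h3 := h2.const_mul cst
  convert! h3 using 1
  rcases n with _ | m
  · simp
  · rw [mul_div_assoc', div_eq_div_iff (pow_ne_zero _ h) (pow_ne_zero _ (pow_ne_zero _ h))]
    push_cast
    ring

lemma hasDerivAt_log_add (b : ℝ) (x : ℝ) (h : 0 < x + b) :
    HasDerivAt (fun y => Real.log (y + b)) (1 / (x + b)) x := by
  have := ((hasDerivAt_id x).add_const b).log h.ne'
  simpa using this

def UU (p : ℕ) (x : ℝ) : ℝ :=
  Real.eulerMascheroniConstant + x * Real.log x - x * Real.log (x + (p + 1))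
    + ∑ k ∈ Finset.range (p + 1), x / (x + k)

def DD (p : ℕ) : ℕ → ℝ → ℝ
  | 0 => UU p
  | 1 => fun x => Real.log x - Real.log (x + (p + 1)) + (p + 1) / (x + (p + 1))
      + ∑ k ∈ Finset.range (p + 1), (k : ℝ) / (x + k) ^ 2
  | (m + 2) => fun x => (-1 : ℝ) ^ m *
      ((m.factorial : ℝ) * (1 / x ^ (m + 1) - 1 / (x + (p + 1)) ^ (m + 1))
        - (p + 1) * ((m + 1).factorial : ℝ) / (x + (p + 1)) ^ (m + 2)
        - ((m + 2).factorial : ℝ) * ∑ k ∈ Finset.range (p + 1), (k : ℝ) / (x + k) ^ (m + 3))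

def EE : ℕ → ℝ → ℝ
  | 0 => fun x => -Real.log x
  | (m + 1) => fun x => -((-1 : ℝ) ^ m * (m.factorial : ℝ) / x ^ (m + 1))

lemma hasDerivAt_EE (j : ℕ) (x : ℝ) (hx : 0 < x) :
    HasDerivAt (EE j) (EE (j + 1) x) x := by
  rcases j with _ | m
  · have := (Real.hasDerivAt_log hx.ne').fun_neg
    convert! this using 1
    simp [EE]
  · have h0 : (fun y : ℝ => EE (m+1) y) = (fun y => (-((-1:ℝ)^m * m.factorial)) / (y + 0) ^ (m+1)) := by
      funext y; simp [EE]; ring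
    have := hasDerivAt_cdiv_pow (-((-1:ℝ)^m * m.factorial)) 0 (m+1) x (by simpa using hx.ne')
    rw [← h0] at this
    convert! this using 1
    show -((-1:ℝ)^(m+1) * ((m+1).factorial : ℝ) / x ^ (m+2)) = _
    rw [add_zero, Nat.factorial_succ]
    push_cast
    field_simp
    ring


lemma hasDerivAt_cdiv_pow0 (cst : ℝ) (n : ℕ) (x : ℝ) (h : x ≠ 0) :
    HasDerivAt (fun y => cst / y ^ n) (-(cst * n) / x ^ (n+1)) x := by
  have := hasDerivAt_cdiv_pow cst 0 n x (by simpa using h)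
  have hfun : (fun y : ℝ => cst / (y + 0) ^ n) = (fun y => cst / y ^ n) := by
    funext y; rw [add_zero]
  rw [hfun, add_zero] at this
  exact this

lemma hasDerivAt_DD (p : ℕ) (j : ℕ) (x : ℝ) (hx : 0 < x) :
    HasDerivAt (DD p j) (DD p (j + 1) x) x := by
  have hc : (0:ℝ) < (p:ℝ) + 1 := by positivity
  have hxc : (0:ℝ) < x + ((p:ℝ) + 1) := by linarith
  have hxk : ∀ k : ℕ, (0:ℝ) < x + (k:ℝ) := fun k => by
    have : (0:ℝ) ≤ (k:ℝ) := Nat.cast_nonneg k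
    linarith
  rcases j with _ | _ | m
  · -- j = 0 : UU p to DD p 1
    have t2 : HasDerivAt (fun y : ℝ => y * Real.log y) (Real.log x + 1) x := by
      have := (hasDerivAt_id x).fun_mul (Real.hasDerivAt_log hx.ne')
      convert! this using 1
      simp only [id_eq]; field_simp
    have t3 : HasDerivAt (fun y : ℝ => y * Real.log (y + ((p:ℝ) + 1)))
        (Real.log (x + ((p:ℝ)+1)) + x / (x + ((p:ℝ)+1))) x := by
      have := (hasDerivAt_id x).fun_mul (hasDerivAt_log_add ((p:ℝ)+1) x hxc)
      convert! this using 1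
      simp only [id_eq]; field_simp
    have t4 : HasDerivAt (fun y : ℝ => ∑ k ∈ Finset.range (p+1), y / (y + (k:ℝ)))
        (∑ k ∈ Finset.range (p+1), (k:ℝ) / (x + (k:ℝ)) ^ 2) x := by
      apply HasDerivAt.fun_sum
      intro k _
      have := (hasDerivAt_id x).fun_div ((hasDerivAt_id x).add_const (k:ℝ)) (hxk k).ne'
      convert! this using 1
      simp only [id_eq]; field_simp; ring
    have total := ((t2.const_add Real.eulerMascheroniConstant).fun_sub t3).fun_add t4
    show HasDerivAt (UU p) _ x
    have hUU : UU p = fun y => (Real.eulerMascheroniConstant + y * Real.log y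
        - y * Real.log (y + ((p:ℝ)+1)) + ∑ k ∈ Finset.range (p+1), y / (y + (k:ℝ))) := by
      funext y; simp [UU]
    rw [hUU]
    convert! total using 1
    show DD p 1 x = _
    simp only [DD]
    have e2 : (((p:ℝ)) + 1) / (x + ((p:ℝ) + 1)) = 1 - x / (x + ((p:ℝ)+1)) := by
      field_simp
      ring
    rw [e2]
    ring
  · -- j = 1 : DD p 1 to DD p 2
    have t1 : HasDerivAt (fun y : ℝ => Real.log y) (1/x) x := by
      simpa using Real.hasDerivAt_log hx.ne'
    have t2 := hasDerivAt_log_add ((p:ℝ)+1) x hxc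
    have t3 := hasDerivAt_cdiv_pow ((p:ℝ)+1) ((p:ℝ)+1) 1 x hxc.ne'
    have t4 : HasDerivAt (fun y : ℝ => ∑ k ∈ Finset.range (p+1), (k:ℝ) / (y + (k:ℝ)) ^ 2)
        (∑ k ∈ Finset.range (p+1), (-((k:ℝ) * 2) / (x + (k:ℝ)) ^ 3)) x := by
      apply HasDerivAt.fun_sum
      intro k _
      have := hasDerivAt_cdiv_pow (k:ℝ) (k:ℝ) 2 x (hxk k).ne'
      convert! this using 2
    have t3' : HasDerivAt (fun y : ℝ => ((p:ℝ)+1) / (y + ((p:ℝ)+1)))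
        (-(((p:ℝ)+1) * 1) / (x + ((p:ℝ)+1)) ^ 2) x := by
      have hfun : (fun y : ℝ => ((p:ℝ)+1) / (y + ((p:ℝ)+1)))
          = (fun y : ℝ => ((p:ℝ)+1) / (y + ((p:ℝ)+1)) ^ 1) := by
        funext y; rw [pow_one]
      rw [hfun]
      convert! t3 using 2
      norm_num
    have total := ((t1.fun_sub t2).fun_add t3').fun_add t4
    show HasDerivAt (DD p 1) _ x
    have hDD1 : DD p 1 = fun y => (Real.log y - Real.log (y + ((p:ℝ)+1))
        + ((p:ℝ)+1) / (y + ((p:ℝ)+1)) + ∑ k ∈ Finset.range (p+1), (k:ℝ) / (y + (k:ℝ)) ^ 2) := by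
      funext y; simp only [DD]
    rw [hDD1]
    convert! total using 1
    show DD p 2 x = _
    simp only [DD]
    have hsum : ∑ k ∈ Finset.range (p+1), (-((k:ℝ) * 2) / (x + (k:ℝ)) ^ 3)
        = -((Nat.factorial 2 : ℝ) * ∑ k ∈ Finset.range (p+1), (k:ℝ) / (x + (k:ℝ)) ^ 3) := by
      rw [Finset.mul_sum, ← Finset.sum_neg_distrib]
      apply Finset.sum_congr rfl
      intro k _
      norm_num [Nat.factorial]
      ring
    rw [hsum]
    norm_num [Nat.factorial]
    ring
  · -- j = m + 2
    have s1 := hasDerivAt_cdiv_pow0 1 (m+1) x hx.ne'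
    have s2 := hasDerivAt_cdiv_pow 1 ((p:ℝ)+1) (m+1) x hxc.ne'
    have s3 := hasDerivAt_cdiv_pow (((p:ℝ)+1) * ((m+1).factorial : ℝ)) ((p:ℝ)+1) (m+2) x hxc.ne'
    have s4 : HasDerivAt (fun y : ℝ => ∑ k ∈ Finset.range (p+1), (k:ℝ) / (y + (k:ℝ)) ^ (m+3))
        (∑ k ∈ Finset.range (p+1), (-((k:ℝ) * (m+3)) / (x + (k:ℝ)) ^ (m+4))) x := by
      apply HasDerivAt.fun_sum
      intro k _
      have := hasDerivAt_cdiv_pow (k:ℝ) (k:ℝ) (m+3) x (hxk k).ne'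
      convert! this using 2
      push_cast; ring
    have T1 := (s1.fun_sub s2).const_mul ((m.factorial : ℝ))
    have T3 := s4.const_mul (((m+2).factorial : ℝ))
    have total := ((T1.fun_sub s3).fun_sub T3).const_mul ((-1:ℝ)^m)
    show HasDerivAt (DD p (m+2)) _ x
    have hDDm : DD p (m+2) = fun y => (-1:ℝ)^m *
        ((m.factorial : ℝ) * (1 / y ^ (m+1) - 1 / (y + ((p:ℝ)+1)) ^ (m+1))
          - ((p:ℝ)+1) * ((m+1).factorial : ℝ) / (y + ((p:ℝ)+1)) ^ (m+2)
          - ((m+2).factorial : ℝ) * ∑ k ∈ Finset.range (p+1), (k:ℝ) / (y + (k:ℝ)) ^ (m+3)) := by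
      funext y; simp only [DD]
    rw [hDDm]
    convert! total using 1
    show DD p (m+3) x = _
    simp only [DD]
    have hsum : ∑ k ∈ Finset.range (p+1), (-((k:ℝ) * (m+3)) / (x + (k:ℝ)) ^ (m+4))
        = -(((m:ℝ)+3) * ∑ k ∈ Finset.range (p+1), (k:ℝ) / (x + (k:ℝ)) ^ (m+4)) := by
      rw [Finset.mul_sum, ← Finset.sum_neg_distrib]
      apply Finset.sum_congr rfl
      intro k _
      push_cast; ring
    rw [hsum]
    have f1 : ((m+1).factorial : ℝ) = ((m:ℝ)+1) * (m.factorial : ℝ) := by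
      rw [Nat.factorial_succ]; push_cast; ring
    have f2 : ((m+2).factorial : ℝ) = ((m:ℝ)+2) * ((m+1).factorial : ℝ) := by
      rw [show m+2 = (m+1)+1 from rfl, Nat.factorial_succ]; push_cast; ring
    have f3 : ((m+3).factorial : ℝ) = ((m:ℝ)+3) * ((m+2).factorial : ℝ) := by
      rw [show m+3 = (m+2)+1 from rfl, Nat.factorial_succ]; push_cast; ring
    rw [show m+3 = (m+1)+2 from rfl] at *
    simp only [f3, f2, f1, pow_succ]
    push_cast
    ring

lemma EE_nonneg (j : ℕ) (x : ℝ) (hx : 0 < x) (hx1 : x < 1) :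
    0 ≤ (-1 : ℝ) ^ j * EE j x := by
  rcases j with _ | m
  · simp only [EE, pow_zero, one_mul]
    simp only [neg_nonneg]
    exact Real.log_nonpos hx.le hx1.le
  · have h1 : (-1 : ℝ)^(m+1) * EE (m+1) x
        = ((-1:ℝ)^(m+1) * (-1)^(m+1)) * ((m.factorial : ℝ) / x^(m+1)) := by
      simp only [EE, pow_succ]
      ring
    have h2 : ((-1:ℝ)^(m+1) * (-1)^(m+1)) = 1 := by
      rw [← sq, ← pow_mul, mul_comm, pow_mul]
      norm_num
    rw [h1, h2, one_mul]
    positivity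

lemma UU_nonneg (p : ℕ) (x : ℝ) (hx : 0 < x) : 0 ≤ UU p x := by
  have hγ : (0:ℝ) < Real.eulerMascheroniConstant :=
    lt_trans (by norm_num) Real.one_half_lt_eulerMascheroniConstant
  have htel := telescope_log x hx (p+1)
  have hcast : (((p+1 : ℕ)):ℝ) = (p:ℝ) + 1 := by push_cast; ring
  rw [hcast] at htel
  have hmul := mul_le_mul_of_nonneg_left htel hx.le
  rw [Finset.mul_sum] at hmul
  have hsum_eq : ∑ k ∈ Finset.range (p+1), x * (1 / (x + (k:ℝ)))
      = ∑ k ∈ Finset.range (p+1), x / (x + (k:ℝ)) := by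
    apply Finset.sum_congr rfl
    intro k _
    ring
  rw [hsum_eq] at hmul
  have : x * (Real.log (x + ((p:ℝ)+1)) - Real.log x)
      = x * Real.log (x + ((p:ℝ)+1)) - x * Real.log x := by ring
  rw [this] at hmul
  simp only [UU]
  have e : x + ((p:ℕ):ℝ) + 1 = x + (((p:ℕ):ℝ) + 1) := by ring
  linarith [hmul]

lemma DD_nonneg (p : ℕ) (hp : 1 ≤ p) (j : ℕ) (x : ℝ) (hx : 0 < x) :
    0 ≤ (-1 : ℝ) ^ j * DD p j x := by
  have hxc : (0:ℝ) < x + ((p:ℝ) + 1) := by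
    have : (0:ℝ) ≤ (p:ℝ) := Nat.cast_nonneg p
    linarith
  rcases j with _ | _ | m
  · simpa [DD] using UU_nonneg p x hx
  · have h := main1 x hx p
    simp only [pow_one, DD]
    have e : x + ((p:ℝ) + 1) = x + (p:ℝ) + 1 := by ring
    rw [e]
    nlinarith [h]
  · have hmain := mainN (m+1) (by omega) x hx p
    have hfact : (0:ℝ) ≤ (m.factorial : ℝ) := by positivity
    have hsign : (-1:ℝ)^(m+2) * DD p (m+2) x
        = (m.factorial : ℝ) * (1 / x ^ (m + 1) - 1 / (x + ((p:ℝ) + 1)) ^ (m + 1))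
          - ((p:ℝ) + 1) * ((m + 1).factorial : ℝ) / (x + ((p:ℝ) + 1)) ^ (m + 2)
          - ((m + 2).factorial : ℝ) * ∑ k ∈ Finset.range (p + 1), (k : ℝ) / (x + k) ^ (m + 3) := by
      simp only [DD]
      have h2 : (-1:ℝ)^(m+2) * (-1)^m = 1 := by
        rw [← pow_add]
        rw [show m+2+m = 2*(m+1) from by ring, pow_mul]
        norm_num
      rw [← mul_assoc, h2, one_mul]
    rw [hsign]
    have f1 : ((m+1).factorial : ℝ) = ((m:ℝ)+1) * (m.factorial : ℝ) := by
      rw [Nat.factorial_succ]; push_cast; ring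
    have f2 : ((m+2).factorial : ℝ) = ((m:ℝ)+2) * (((m:ℝ)+1) * (m.factorial : ℝ)) := by
      rw [show m+2 = (m+1)+1 from rfl, Nat.factorial_succ, Nat.factorial_succ]; push_cast; ring
    have hcast : ((m+1 : ℕ):ℝ) = (m:ℝ) + 1 := by push_cast; ring
    have hexp : ((m:ℕ)+1) + 2 = m + 3 := by omega
    have hexp2 : ((m:ℕ)+1) + 1 = m + 2 := by omega
    rw [hcast, hexp, hexp2] at hmain
    have e : x + ((p:ℝ) + 1) = x + (p:ℝ) + 1 := by ring
    rw [e, f2, f1]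
    have h0 : 0 ≤ (m.factorial:ℝ) *
        ((1 / x ^ (m + 1) - 1 / (x + (p:ℝ) + 1) ^ (m + 1)
            - ((m:ℝ) + 1) * ((p:ℝ) + 1) / (x + (p:ℝ) + 1) ^ (m + 2))
          - ((m:ℝ) + 1) * ((m:ℝ) + 1 + 1) * ∑ k ∈ Finset.range (p + 1), (k:ℝ) / (x + (k:ℝ)) ^ (m + 3)) :=
      mul_nonneg hfact (by linarith [hmain])
    exact h0.trans_eq (by ring)

def HH (p : ℕ) (n : ℕ) (x : ℝ) : ℝ :=
  ∑ i ∈ Finset.range (n + 1), (n.choose i : ℝ) * DD p i x * EE (n - i) x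

lemma hasDerivAt_HH (p : ℕ) (n : ℕ) (x : ℝ) (hx : 0 < x) :
    HasDerivAt (HH p n) (HH p (n + 1) x) x := by
  have hterm : ∀ i ∈ Finset.range (n+1), HasDerivAt
      (fun y => (n.choose i : ℝ) * DD p i y * EE (n - i) y)
      ((n.choose i : ℝ) * (DD p (i+1) x * EE (n-i) x + DD p i x * EE (n-i+1) x)) x := by
    intro i _
    have h1 := (hasDerivAt_DD p i x hx).fun_mul (hasDerivAt_EE (n-i) x hx)
    have h2 := h1.const_mul (n.choose i : ℝ)
    convert! h2 using 1
    funext y; ring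
  have total := HasDerivAt.fun_sum hterm
  have hfun : HH p n = fun y => ∑ i ∈ Finset.range (n+1),
      (n.choose i : ℝ) * DD p i y * EE (n - i) y := rfl
  rw [hfun]
  convert! total using 1
  show HH p (n+1) x = _
  have expand : ∑ i ∈ Finset.range (n+1),
        (n.choose i : ℝ) * (DD p (i+1) x * EE (n-i) x + DD p i x * EE (n-i+1) x)
      = (∑ i ∈ Finset.range (n+1), (n.choose i : ℝ) * DD p (i+1) x * EE (n-i) x)
        + ∑ i ∈ Finset.range (n+1), (n.choose i : ℝ) * DD p i x * EE (n+1-i) x := by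
    rw [← Finset.sum_add_distrib]
    apply Finset.sum_congr rfl
    intro i hi
    simp only [Finset.mem_range] at hi
    have : n - i + 1 = n + 1 - i := by omega
    rw [this]
    ring
  have hpascal : ∀ i : ℕ, ((n+1).choose (i+1) : ℝ) = (n.choose i : ℝ) + (n.choose (i+1) : ℝ) := by
    intro i
    rw [Nat.choose_succ_succ]
    push_cast
    ring
  have step1 : ∑ i ∈ Finset.range (n+1), ((n+1).choose (i+1) : ℝ) * DD p (i+1) x * EE (n+1-(i+1)) x
      = (∑ i ∈ Finset.range (n+1), (n.choose i : ℝ) * DD p (i+1) x * EE (n-i) x)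
        + ∑ i ∈ Finset.range (n+1), (n.choose (i+1) : ℝ) * DD p (i+1) x * EE (n-i) x := by
    rw [← Finset.sum_add_distrib]
    apply Finset.sum_congr rfl
    intro i hi
    have : n + 1 - (i + 1) = n - i := by omega
    rw [this, hpascal]
    ring
  have peel : HH p (n+1) x
      = (∑ i ∈ Finset.range (n+1), ((n+1).choose (i+1) : ℝ) * DD p (i+1) x * EE (n+1-(i+1)) x)
        + ((n+1).choose 0 : ℝ) * DD p 0 x * EE (n+1-0) x := by
    unfold HH
    exact Finset.sum_range_succ' (fun i => ((n+1).choose i : ℝ) * DD p i x * EE (n+1-i) x) (n+1)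
  have step2 : (∑ i ∈ Finset.range (n+1), (n.choose (i+1) : ℝ) * DD p (i+1) x * EE (n-i) x)
        + ((n+1).choose 0 : ℝ) * DD p 0 x * EE (n+1-0) x
      = ∑ i ∈ Finset.range (n+1), (n.choose i : ℝ) * DD p i x * EE (n+1-i) x := by
    rw [Finset.sum_range_succ (fun i => (n.choose (i+1) : ℝ) * DD p (i+1) x * EE (n-i) x) n]
    rw [Finset.sum_range_succ' (fun i => (n.choose i : ℝ) * DD p i x * EE (n+1-i) x) n]
    have hz : (n.choose (n+1) : ℝ) = 0 := by
      rw [Nat.choose_succ_self]; norm_num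
    rw [hz]
    have hsame : ∑ i ∈ Finset.range n, (n.choose (i+1) : ℝ) * DD p (i+1) x * EE (n-i) x
        = ∑ i ∈ Finset.range n, (n.choose (i+1) : ℝ) * DD p (i+1) x * EE (n+1-(i+1)) x := by
      apply Finset.sum_congr rfl
      intro i hi
      have : n + 1 - (i+1) = n - i := by omega
      rw [this]
    rw [hsame]
    simp
  linarith [peel, step1, step2, expand]

noncomputable def psiP (p : ℕ) (t : ℝ) : ℝ := Real.log p - ∑ k ∈ Finset.range (p + 1), 1 / (t + k)

lemma iteratedDeriv_eq_HH (p : ℕ) (n : ℕ) (x : ℝ) (hx : 0 < x) :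
    iteratedDeriv n (fun y => UU p y * -Real.log y) x = HH p n x := by
  induction n generalizing x with
  | zero =>
    rw [iteratedDeriv_zero]
    simp [HH, DD, EE, Finset.sum_range_one]
  | succ n ih =>
    rw [iteratedDeriv_succ]
    have hev : iteratedDeriv n (fun y => UU p y * -Real.log y) =ᶠ[nhds x] HH p n := by
      filter_upwards [Ioi_mem_nhds hx] with y hy
      exact ih y hy
    rw [hev.deriv_eq]
    exact (hasDerivAt_HH p n x hx).deriv

lemma log_f_eq (p : ℕ) (hp : 1 ≤ p) (t : ℝ) (ht : 0 < t) :
    Real.log (t ^ (t * (psiP p t - Real.log (p * t / (t + p + 1))) -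
        Real.eulerMascheroniConstant)) = UU p t * -Real.log t := by
  have hp0 : (0:ℝ) < (p:ℝ) := by exact_mod_cast Nat.pos_of_ne_zero (by omega)
  have htp : (0:ℝ) < t + (p:ℝ) + 1 := by linarith
  rw [Real.log_rpow ht]
  have hlog : Real.log ((p:ℝ) * t / (t + (p:ℝ) + 1))
      = Real.log (p:ℝ) + Real.log t - Real.log (t + (p:ℝ) + 1) := by
    rw [Real.log_div (by positivity) htp.ne', Real.log_mul hp0.ne' ht.ne']
  have hsum : t * ∑ k ∈ Finset.range (p+1), 1 / (t + (k:ℝ))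
      = ∑ k ∈ Finset.range (p+1), t / (t + (k:ℝ)) := by
    rw [Finset.mul_sum]
    apply Finset.sum_congr rfl
    intro k _
    ring
  have hE : t * (psiP p t - Real.log ((p:ℝ) * t / (t + (p:ℝ) + 1))) -
      Real.eulerMascheroniConstant = -(UU p t) := by
    rw [psiP, hlog, UU]
    have e : t + ((p:ℝ) + 1) = t + (p:ℝ) + 1 := by ring
    rw [e]
    rw [mul_sub, mul_sub, hsum]
    ring
  rw [hE]
  ring

lemma contDiff_h (p : ℕ) : ContDiffOn ℝ (⊤ : ℕ∞) (fun y => UU p y * -Real.log y) (Ioo (0:ℝ) 1) := by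
  intro x hx
  have hx0 : (0:ℝ) < x := hx.1
  apply ContDiffAt.contDiffWithinAt
  have hlog : ContDiffAt ℝ (⊤ : ℕ∞) Real.log x := (Real.contDiffAt_log).mpr hx0.ne'
  have h1 : ContDiffAt ℝ (⊤ : ℕ∞) (fun y : ℝ => y * Real.log y) x :=
    contDiffAt_id.mul hlog
  have h2 : ContDiffAt ℝ (⊤ : ℕ∞) (fun y : ℝ => y * Real.log (y + ((p:ℝ)+1))) x := by
    apply contDiffAt_id.mul
    have hc : (0:ℝ) < x + ((p:ℝ)+1) := by
      have : (0:ℝ) ≤ (p:ℝ) := Nat.cast_nonneg p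
      linarith
    exact ((Real.contDiffAt_log).mpr hc.ne').comp x (contDiffAt_id.add contDiffAt_const)
  have h3 : ContDiffAt ℝ (⊤ : ℕ∞) (fun y : ℝ => ∑ k ∈ Finset.range (p+1), y / (y + (k:ℝ))) x := by
    apply ContDiffAt.sum
    intro k _
    have hk : (0:ℝ) < x + (k:ℝ) := by
      have : (0:ℝ) ≤ (k:ℝ) := Nat.cast_nonneg k
      linarith
    exact contDiffAt_id.div (contDiffAt_id.add contDiffAt_const) hk.ne'
  have hUU : ContDiffAt ℝ (⊤ : ℕ∞) (UU p) x := by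
    have : UU p = fun y => Real.eulerMascheroniConstant + y * Real.log y
        - y * Real.log (y + ((p:ℝ)+1)) + ∑ k ∈ Finset.range (p+1), y / (y + (k:ℝ)) := by
      funext y; simp [UU]
    rw [this]
    exact (((contDiffAt_const (c := Real.eulerMascheroniConstant)).add h1).sub h2).add h3
  exact hUU.mul hlog.neg

theorem q_p_lcm (p : ℕ) (hp : 1 ≤ p) :
    LogCompletelyMonotonicOn
      (fun t => t ^ (t * (psiP p t - Real.log (p * t / (t + p + 1))) -
        Real.eulerMascheroniConstant)) (Ioo 0 1) := by
  refine ⟨?_, ?_, ?_⟩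
  · intro x hx
    exact Real.rpow_pos_of_pos hx.1 _
  · exact (contDiff_h p).congr (fun x hx => log_f_eq p hp x hx.1)
  · intro n hn x hx
    have heq : iteratedDeriv n (fun t => Real.log (t ^ (t * (psiP p t
        - Real.log (p * t / (t + p + 1))) - Real.eulerMascheroniConstant))) x
        = iteratedDeriv n (fun y => UU p y * -Real.log y) x := by
      apply Filter.EventuallyEq.iteratedDeriv_eq
      filter_upwards [Ioi_mem_nhds hx.1] with y hy
      exact log_f_eq p hp y hy
    rw [heq, iteratedDeriv_eq_HH p n x hx.1]
    unfold HH
    rw [Finset.mul_sum]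
    apply Finset.sum_nonneg
    intro i hi
    simp only [Finset.mem_range] at hi
    have hsplit : (-1:ℝ)^n = (-1:ℝ)^i * (-1:ℝ)^(n-i) := by
      rw [← pow_add]
      congr 1
      omega
    rw [hsplit]
    have e : (-1:ℝ)^i * (-1:ℝ)^(n-i) * ((n.choose i : ℝ) * DD p i x * EE (n-i) x)
        = (n.choose i : ℝ) * (((-1:ℝ)^i * DD p i x) * ((-1:ℝ)^(n-i) * EE (n-i) x)) := by
      ring
    rw [e]
    apply mul_nonneg (by positivity)
    exact mul_nonneg (DD_nonneg p hp i x hx.1) (EE_nonneg (n-i) x hx.1 hx.2)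
end
end

section
/- For all t ∈ (0,1), the value log q(t) = -t(log t − ψ(t)) log t − γ log t is nonnegative, where ψ is the digamma function and γ the Euler–Mascheroni constant. -/
noncomputable section
open Real Set

/-!
Since `log ∘ Γ` is convex on `(0, ∞)`, its derivative `ψ t` is at most its slope between `t` and
`t + 1`, which is `log t` by `Γ (t + 1) = t Γ t`. For `t ∈ (0, 1)` we have `log t ≤ 0`, so
`-t (log t - ψ t) log t` is a product of two nonpositive factors and `-γ log t ≥ 0` as `γ > 0`.
-/

lemma hasDerivAt_log_Gamma {t : ℝ} (ht : 0 < t) : HasDerivAt (log ∘ Gamma) (digamma t) t := by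
  have hΓ : DifferentiableAt ℝ Gamma t :=
    differentiableAt_Gamma fun m hm => by linarith [(Nat.cast_nonneg m : (0 : ℝ) ≤ m)]
  exact hΓ.hasDerivAt.log (Gamma_pos_of_pos ht).ne'

lemma slope_log_Gamma_add_one {t : ℝ} (ht : 0 < t) :
    slope (log ∘ Gamma) t (t + 1) = log t := by
  rw [slope_def_field, Function.comp_apply, Function.comp_apply, Gamma_add_one ht.ne',
    log_mul ht.ne' (Gamma_pos_of_pos ht).ne']
  ring

lemma digamma_le_log_s18 {t : ℝ} (ht : 0 < t) : digamma t ≤ log t :=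
  slope_log_Gamma_add_one ht ▸ convexOn_log_Gamma.le_slope_of_hasDerivAt ht
    (mem_Ioi.mpr (by linarith)) (lt_add_one t) (hasDerivAt_log_Gamma ht)

theorem log_q_nonneg (t : ℝ) (ht : t ∈ Ioo (0:ℝ) 1) :
    0 ≤ -t * (Real.log t - digamma t) * Real.log t -
      Real.eulerMascheroniConstant * Real.log t := by
  obtain ⟨ht0, ht1⟩ := ht
  have hlog : log t ≤ 0 := log_nonpos ht0.le ht1.le
  have hγ : 0 ≤ eulerMascheroniConstant := by linarith [one_half_lt_eulerMascheroniConstant]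
  have hfirst : 0 ≤ -t * (log t - digamma t) * log t :=
    mul_nonneg_of_nonpos_of_nonpos (mul_nonpos_of_nonpos_of_nonneg (neg_nonpos.mpr ht0.le)
      (sub_nonneg.mpr (digamma_le_log_s18 ht0))) hlog
  have hsecond : eulerMascheroniConstant * log t ≤ 0 := mul_nonpos_of_nonneg_of_nonpos hγ hlog
  linarith
end
end

section
/- Let f be a function on an open interval I with f > 0 on I. If (-1)^n (log f)^(n)(x) ≥ 0 for all n ≥ 1 and all x in I, then (-1)^n f^(n)(x) ≥ 0 for all n ≥ 0 and all x in I. -/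
noncomputable section
open Real Set

lemma itd_open {s : Set ℝ} (hs : IsOpen s) {x : ℝ} (hx : x ∈ s) (n : ℕ) (f : ℝ → ℝ) :
    iteratedDerivWithin n f s x = iteratedDeriv n f x := by
  simp [iteratedDerivWithin, iteratedDeriv, iteratedFDerivWithin_of_isOpen n hs hx]

lemma itd_add {s : Set ℝ} (hs : IsOpen s) {x : ℝ} (hx : x ∈ s) {n : ℕ} {u v : ℝ → ℝ}
    (hu : ContDiffOn ℝ (⊤ : ℕ∞) u s) (hv : ContDiffOn ℝ (⊤ : ℕ∞) v s) :
    iteratedDeriv n (fun y => u y + v y) x = iteratedDeriv n u x + iteratedDeriv n v x := by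
  rw [← itd_open hs hx, ← itd_open hs hx n u, ← itd_open hs hx n v]
  exact iteratedDerivWithin_add hx hs.uniqueDiffOn ((hu x hx).of_le (by exact_mod_cast le_top)) ((hv x hx).of_le (by exact_mod_cast le_top))

/-- Products of functions that are completely monotonic up to order `n` have the right
sign of the `n`-th derivative. -/
lemma cm_mul {s : Set ℝ} (hs : IsOpen s) :
    ∀ (n : ℕ) (u v : ℝ → ℝ), ContDiffOn ℝ (⊤ : ℕ∞) u s → ContDiffOn ℝ (⊤ : ℕ∞) v s →
      (∀ k ≤ n, ∀ x ∈ s, 0 ≤ (-1 : ℝ) ^ k * iteratedDeriv k u x) →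
      (∀ k ≤ n, ∀ x ∈ s, 0 ≤ (-1 : ℝ) ^ k * iteratedDeriv k v x) →
      ∀ x ∈ s, 0 ≤ (-1 : ℝ) ^ n * iteratedDeriv n (fun y => u y * v y) x := by
  intro n
  induction n with
  | zero =>
    intro u v _ _ hu2 hv2 x hx
    simpa using mul_nonneg (by simpa using hu2 0 le_rfl x hx) (by simpa using hv2 0 le_rfl x hx)
  | succ n IH =>
    intro u v hu hv hu2 hv2 x hx
    have hdu : ContDiffOn ℝ (⊤ : ℕ∞) (deriv u) s := hu.deriv_of_isOpen hs (by simp)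
    have hdv : ContDiffOn ℝ (⊤ : ℕ∞) (deriv v) s := hv.deriv_of_isOpen hs (by simp)
    have hderiv : Set.EqOn (deriv (fun y => u y * v y))
        (fun y => deriv u y * v y + u y * deriv v y) s := by
      intro y hy
      have hdu' : DifferentiableAt ℝ u y :=
        (hu.differentiableOn (by simp)).differentiableAt (hs.mem_nhds hy)
      have hdv' : DifferentiableAt ℝ v y :=
        (hv.differentiableOn (by simp)).differentiableAt (hs.mem_nhds hy)
      exact deriv_mul hdu' hdv'
    have hEq : iteratedDeriv (n + 1) (fun y => u y * v y) x
        = iteratedDeriv n (fun y => deriv u y * v y + u y * deriv v y) x := by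
      rw [iteratedDeriv_succ']
      exact hderiv.iteratedDeriv_of_isOpen hs n hx
    have hadd : iteratedDeriv n (fun y => deriv u y * v y + u y * deriv v y) x
        = iteratedDeriv n (fun y => deriv u y * v y) x
          + iteratedDeriv n (fun y => u y * deriv v y) x :=
      itd_add hs hx (hdu.mul hv) (hu.mul hdv)
    have hA : iteratedDeriv n (fun y => deriv u y * v y) x
        = -iteratedDeriv n (fun y => (-deriv u y) * v y) x := by
      rw [← iteratedDeriv_neg n (fun y => (-deriv u y) * v y) x]
      congr 1; funext y; simp only [Pi.neg_apply]; ring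
    have hB : iteratedDeriv n (fun y => u y * deriv v y) x
        = -iteratedDeriv n (fun y => u y * (-deriv v y)) x := by
      rw [← iteratedDeriv_neg n (fun y => u y * (-deriv v y)) x]
      congr 1; funext y; simp only [Pi.neg_apply]; ring
    have hnu : ∀ k ≤ n, ∀ y ∈ s, 0 ≤ (-1 : ℝ) ^ k * iteratedDeriv k (fun y => -deriv u y) y := by
      intro k hk y hy
      have h1 : iteratedDeriv k (fun y => -deriv u y) y = -iteratedDeriv (k + 1) u y := by
        rw [iteratedDeriv_succ']; exact iteratedDeriv_neg k (deriv u) y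
      have h2 := hu2 (k + 1) (by omega) y hy
      rw [h1, show (-1 : ℝ) ^ k * -iteratedDeriv (k + 1) u y
        = (-1 : ℝ) ^ (k + 1) * iteratedDeriv (k + 1) u y by ring]
      exact h2
    have hnv : ∀ k ≤ n, ∀ y ∈ s, 0 ≤ (-1 : ℝ) ^ k * iteratedDeriv k (fun y => -deriv v y) y := by
      intro k hk y hy
      have h1 : iteratedDeriv k (fun y => -deriv v y) y = -iteratedDeriv (k + 1) v y := by
        rw [iteratedDeriv_succ']; exact iteratedDeriv_neg k (deriv v) y
      have h2 := hv2 (k + 1) (by omega) y hy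
      rw [h1, show (-1 : ℝ) ^ k * -iteratedDeriv (k + 1) v y
        = (-1 : ℝ) ^ (k + 1) * iteratedDeriv (k + 1) v y by ring]
      exact h2
    have IHA := IH (fun y => -deriv u y) v hdu.neg hv hnu
      (fun k hk y hy => hv2 k (by omega) y hy) x hx
    have IHB := IH u (fun y => -deriv v y) hu hdv.neg
      (fun k hk y hy => hu2 k (by omega) y hy) hnv x hx
    have IHA' : 0 ≤ (-1 : ℝ) ^ n * iteratedDeriv n (fun y => -deriv u y * v y) x := IHA
    have IHB' : 0 ≤ (-1 : ℝ) ^ n * iteratedDeriv n (fun y => u y * -deriv v y) x := IHB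
    rw [hEq, hadd, hA, hB, show (-1 : ℝ) ^ (n + 1) *
        (-iteratedDeriv n (fun y => -deriv u y * v y) x
          + -iteratedDeriv n (fun y => u y * -deriv v y) x)
      = (-1 : ℝ) ^ n * iteratedDeriv n (fun y => -deriv u y * v y) x
          + (-1 : ℝ) ^ n * iteratedDeriv n (fun y => u y * -deriv v y) x by ring]
    exact add_nonneg IHA' IHB'

theorem lcm_subset_cm_general (I : Set ℝ) (hI : IsOpen I) (hI' : I.OrdConnected)
    (f : ℝ → ℝ) (hpos : ∀ x ∈ I, 0 < f x) (hsmooth : ContDiffOn ℝ (⊤ : ℕ∞) f I)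
    (hlog : ∀ (n : ℕ), 1 ≤ n → ∀ x ∈ I,
      0 ≤ (-1 : ℝ) ^ n * iteratedDeriv n (fun x => Real.log (f x)) x) :
    CompletelyMonotonicOn f I := by
  set g : ℝ → ℝ := fun x => Real.log (f x) with hg_def
  have hg : ContDiffOn ℝ (⊤ : ℕ∞) g I := hsmooth.log (fun x hx => (hpos x hx).ne')
  have hfg' : Set.EqOn (deriv f) (fun y => f y * deriv g y) I := by
    intro y hy
    have hdf : DifferentiableAt ℝ f y :=
      (hsmooth.differentiableOn (by simp)).differentiableAt (hI.mem_nhds hy)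
    have hgd : HasDerivAt g ((f y)⁻¹ * deriv f y) y :=
      (Real.hasDerivAt_log (hpos y hy).ne').comp y hdf.hasDerivAt
    have : deriv g y = (f y)⁻¹ * deriv f y := hgd.deriv
    show deriv f y = f y * deriv g y
    rw [this, ← mul_assoc, mul_inv_cancel₀ (hpos y hy).ne', one_mul]
  refine ⟨hsmooth, ?_⟩
  intro n
  induction n using Nat.strong_induction_on with
  | _ n IH =>
    match n with
    | 0 =>
      intro x hx
      simpa using (hpos x hx).le
    | (m + 1) =>
      intro x hx
      have hEq : iteratedDeriv (m + 1) f x = iteratedDeriv m (fun y => f y * deriv g y) x := by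
        rw [iteratedDeriv_succ']
        exact hfg'.iteratedDeriv_of_isOpen hI m hx
      have h2 : iteratedDeriv m (fun y => f y * deriv g y) x
          = -iteratedDeriv m (fun y => f y * (-deriv g y)) x := by
        rw [← iteratedDeriv_neg m (fun y => f y * (-deriv g y)) x]
        congr 1; funext y; simp only [Pi.neg_apply]; ring
      have hv : ContDiffOn ℝ (⊤ : ℕ∞) (fun y => -deriv g y) I := (hg.deriv_of_isOpen hI (by simp)).neg
      have hv2 : ∀ k ≤ m, ∀ y ∈ I, 0 ≤ (-1 : ℝ) ^ k * iteratedDeriv k (fun y => -deriv g y) y := by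
        intro k hk y hy
        have h1 : iteratedDeriv k (fun y => -deriv g y) y = -iteratedDeriv (k + 1) g y := by
          rw [iteratedDeriv_succ']; exact iteratedDeriv_neg k (deriv g) y
        have h2 := hlog (k + 1) (by omega) y hy
        rw [h1, show (-1 : ℝ) ^ k * -iteratedDeriv (k + 1) g y
          = (-1 : ℝ) ^ (k + 1) * iteratedDeriv (k + 1) g y by ring]
        exact h2
      have main := cm_mul hI m f (fun y => -deriv g y) hsmooth hv
        (fun k hk y hy => IH k (by omega) y hy) hv2 x hx
      rw [hEq, h2, show (-1 : ℝ) ^ (m + 1) * -iteratedDeriv m (fun y => f y * -deriv g y) x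
        = (-1 : ℝ) ^ m * iteratedDeriv m (fun y => f y * -deriv g y) x by ring]
      exact main
end
end
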